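/- arXiv:2410.24008 — 10 statements merged into one kernel-verified Lean document; each statement's English description precedes it below -/
import Mathlib

section
/- Let V be a finite-dimensional vector space over ℚ with an increasing filtration (C_i V)_{i ∈ ℕ} by subspaces such that C_i V = V for all sufficiently large i (set C_{-1} V = 0), and let ⟨−,−⟩ : V × V → ℚ be a perfect bilinear pairing. Assume there exists N > 0 such that: (i) ⟨v, w⟩ = 0 whenever v ∈ C_i V, w ∈ C_j V and i + j < N; and (ii) dim(C_i V / C_{i-1} V) = dim(C_{N-i} V / C_{N-i-1} V) for every i. Then the pairing descends to a well-defined pairing (C_i V / C_{i-1} V) × (C_{N-i} V / C_{N-i-1} V) → ℚ for every i, and this induced pairing is perfect. -/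
/-!
Write `d i = dim C i`. The symmetry of the graded dimensions says that `d i + d (N - 1 - i)` does
not depend on `i`, and taking `i` very negative shows that it equals `dim V`. Hence `C (i - 1)`,
which is orthogonal to `C (N - i)` by the vanishing hypothesis, has the dimension of the full
left orthogonal of `C (N - i)` under the perfect pairing, so it is that orthogonal: this is
left nondegeneracy of the graded pairing. The transposed pairing gives right nondegeneracy.
-/

open Module LinearMap

namespace LinearMap

section Subquotient

variable {R M N : Type*} [CommRing R] [AddCommGroup M] [Module R M] [AddCommGroup N] [Module R N]
  (B : M →ₗ[R] N →ₗ[R] R) {U U' : Submodule R M} {W W' : Submodule R N}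

def subquotientPairing (h₁ : ∀ u ∈ U', ∀ w ∈ W, B u w = 0) (h₂ : ∀ u ∈ U, ∀ w ∈ W', B u w = 0) :
    (U ⧸ U'.comap U.subtype) →ₗ[R] (W ⧸ W'.comap W.subtype) →ₗ[R] R :=
  (B.domRestrict₁₂ U W).liftQ₂ _ _ (fun u hu => ext fun w => h₁ u hu w w.2)
    (fun w hw => ext fun u => h₂ u u.2 w hw)

variable (h₁ : ∀ u ∈ U', ∀ w ∈ W, B u w = 0) (h₂ : ∀ u ∈ U, ∀ w ∈ W', B u w = 0)

@[simp]
theorem subquotientPairing_mk_mk (u : U) (w : W) :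
    B.subquotientPairing h₁ h₂ (Submodule.Quotient.mk u) (Submodule.Quotient.mk w) = B u w :=
  rfl

theorem separatingLeft_subquotientPairing (hU' : ∀ u ∈ U, (∀ w ∈ W, B u w = 0) → u ∈ U') :
    (B.subquotientPairing h₁ h₂).SeparatingLeft := by
  intro x hx
  obtain ⟨u, rfl⟩ := Submodule.Quotient.mk_surjective _ x
  rw [Submodule.Quotient.mk_eq_zero, Submodule.mem_comap]
  exact hU' u u.2 fun w hw => hx (Submodule.Quotient.mk ⟨w, hw⟩)

theorem separatingRight_subquotientPairing (hW' : ∀ w ∈ W, (∀ u ∈ U, B u w = 0) → w ∈ W') :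
    (B.subquotientPairing h₁ h₂).SeparatingRight := by
  intro y hy
  obtain ⟨w, rfl⟩ := Submodule.Quotient.mk_surjective _ y
  rw [Submodule.Quotient.mk_eq_zero, Submodule.mem_comap]
  exact hW' w w.2 fun u hu => hy (Submodule.Quotient.mk ⟨u, hu⟩)

end Subquotient

theorem IsPerfPair.mem_of_forall_apply_eq_zero {K M N : Type*} [Field K] [AddCommGroup M]
    [Module K M] [AddCommGroup N] [Module K N] [FiniteDimensional K M]
    (p : M →ₗ[K] N →ₗ[K] K) [p.IsPerfPair] {U : Submodule K M} {W : Submodule K N}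
    (horth : ∀ u ∈ U, ∀ w ∈ W, p u w = 0) (hdim : finrank K U + finrank K W = finrank K M)
    {x : M} (hx : ∀ w ∈ W, p x w = 0) : x ∈ U := by
  have : FiniteDimensional K N := Module.Finite.equiv p.flip.toPerfPair.symm
  set L := W.dualAnnihilator.comap (p.toPerfPair : M →ₗ[K] Dual K N)
  have hUL : U ≤ L := fun u hu => (Submodule.mem_dualAnnihilator _).2 (horth u hu)
  have hL : finrank K L = finrank K W.dualAnnihilator := by
    rw [show L = _ from Submodule.comap_equiv_eq_map_symm _ _]
    exact p.toPerfPair.symm.finrank_map_eq _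
  have hW := Subspace.finrank_add_finrank_dualAnnihilator_eq W
  have hMN := Module.finrank_of_isPerfPair p
  rw [Submodule.eq_of_le_of_finrank_eq hUL (by omega)]
  exact (Submodule.mem_dualAnnihilator _).2 hx

end LinearMap

theorem apply_add_apply_reflect_eq {d : ℤ → ℤ} {N : ℤ}
    (h : ∀ i, d i - d (i - 1) = d (N - i) - d (N - i - 1)) (i j : ℤ) :
    d i + d (N - 1 - i) = d j + d (N - 1 - j) := by
  have hper : Function.Periodic (fun i => d i + d (N - 1 - i)) 1 := fun i => by
    have := h (i + 1)
    ring_nf at this ⊢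
    linarith
  simpa using (hper.int_mul_eq i).trans (hper.int_mul_eq j).symm

theorem finrank_add_finrank_eq_finrank_of_gradedSymm {K V : Type*} [DivisionRing K]
    [AddCommGroup V] [Module K V] [FiniteDimensional K V] {C : ℤ → Submodule K V}
    (hmono : Monotone C) (hneg : ∀ i : ℤ, i < 0 → C i = ⊥)
    (hexh : ∃ M : ℤ, ∀ i : ℤ, M ≤ i → C i = ⊤) {N : ℤ}
    (hsym : ∀ i : ℤ, finrank K (C i ⧸ (C (i - 1)).comap (C i).subtype)
      = finrank K (C (N - i) ⧸ (C (N - i - 1)).comap (C (N - i)).subtype))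
    {i j : ℤ} (hij : i + j = N - 1) :
    finrank K (C i) + finrank K (C j) = finrank K V := by
  obtain ⟨M, hM⟩ := hexh
  obtain rfl : j = N - 1 - i := by omega
  have hgr (i : ℤ) : (finrank K (C i ⧸ (C (i - 1)).comap (C i).subtype) : ℤ) =
      finrank K (C i) - finrank K (C (i - 1)) := by
    have := Submodule.finrank_quotient_add_finrank ((C (i - 1)).comap (C i).subtype)
    rw [(Submodule.comapSubtypeEquivOfLe (hmono (by omega : i - 1 ≤ i))).finrank_eq] at this
    omega
  set b := min (-1) (N - 1 - M)
  have hreflect := apply_add_apply_reflect_eq (d := fun i => finrank K (C i)) (N := N)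
    (fun i => by rw [← hgr, ← hgr, hsym]) i b
  have hb : C b = ⊥ := hneg b (by omega)
  have hb' : C (N - 1 - b) = ⊤ := hM (N - 1 - b) (by omega)
  rw [hb, hb', finrank_bot, finrank_top] at hreflect
  omega

theorem stmt0_general (V : Type*) [AddCommGroup V] [Module ℚ V] [FiniteDimensional ℚ V]
    (C : ℤ → Submodule ℚ V) (hmono : Monotone C)
    (hneg : ∀ i : ℤ, i < 0 → C i = ⊥)
    (hexh : ∃ M : ℤ, ∀ i : ℤ, M ≤ i → C i = ⊤)
    (B : V →ₗ[ℚ] V →ₗ[ℚ] ℚ)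
    (hperf : Function.Bijective fun v : V => B v)
    (N : ℤ)
    (hvanish : ∀ i j : ℤ, i + j < N → ∀ v ∈ C i, ∀ w ∈ C j, B v w = 0)
    (hsym : ∀ i : ℤ,
      Module.finrank ℚ (C i ⧸ Submodule.comap (C i).subtype (C (i - 1)))
        = Module.finrank ℚ (C (N - i) ⧸ Submodule.comap (C (N - i)).subtype (C (N - i - 1)))) :
    ∃ Bgr : ∀ i : ℤ,
        (C i ⧸ Submodule.comap (C i).subtype (C (i - 1))) →ₗ[ℚ]
          (C (N - i) ⧸ Submodule.comap (C (N - i)).subtype (C (N - i - 1))) →ₗ[ℚ] ℚ,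
      (∀ (i : ℤ) (v : C i) (w : C (N - i)),
        Bgr i (Submodule.Quotient.mk v) (Submodule.Quotient.mk w) = B v w) ∧
      (∀ (i : ℤ) (x : C i ⧸ Submodule.comap (C i).subtype (C (i - 1))),
        (∀ y, Bgr i x y = 0) → x = 0) ∧
      (∀ (i : ℤ) (y : C (N - i) ⧸ Submodule.comap (C (N - i)).subtype (C (N - i - 1))),
        (∀ x, Bgr i x y = 0) → y = 0) := by
  have : B.IsPerfPair := .of_bijective B hperf
  have hdim {i j : ℤ} (hij : i + j = N - 1) : finrank ℚ (C i) + finrank ℚ (C j) = finrank ℚ V :=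
    finrank_add_finrank_eq_finrank_of_gradedSymm hmono hneg hexh hsym hij
  have horth {i j : ℤ} (hij : i + j = N - 1) : ∀ v ∈ C i, ∀ w ∈ C j, B v w = 0 :=
    hvanish i j (by omega)
  refine ⟨fun i => B.subquotientPairing (horth (by omega)) (horth (by omega)),
    fun _ => B.subquotientPairing_mk_mk _ _,
    fun i => B.separatingLeft_subquotientPairing _ _ fun v _ hv => ?_,
    fun i => B.separatingRight_subquotientPairing _ _ fun w _ hw => ?_⟩
  · exact IsPerfPair.mem_of_forall_apply_eq_zero B (horth (by omega)) (hdim (by omega)) hv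
  · exact IsPerfPair.mem_of_forall_apply_eq_zero B.flip
      (fun v hv u hu => horth (by omega) u hu v hv) (hdim (by omega)) hw

theorem stmt0 (V : Type*) [AddCommGroup V] [Module ℚ V] [FiniteDimensional ℚ V]
    (C : ℤ → Submodule ℚ V) (hmono : Monotone C)
    (hneg : ∀ i : ℤ, i < 0 → C i = ⊥)
    (hexh : ∃ M : ℤ, ∀ i : ℤ, M ≤ i → C i = ⊤)
    (B : V →ₗ[ℚ] V →ₗ[ℚ] ℚ)
    (hperf : Function.Bijective fun v : V => B v)
    (N : ℤ) (hN : 0 < N)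
    (hvanish : ∀ i j : ℤ, i + j < N → ∀ v ∈ C i, ∀ w ∈ C j, B v w = 0)
    (hsym : ∀ i : ℤ,
      Module.finrank ℚ (C i ⧸ Submodule.comap (C i).subtype (C (i - 1)))
        = Module.finrank ℚ (C (N - i) ⧸ Submodule.comap (C (N - i)).subtype (C (N - i - 1)))) :
    ∃ Bgr : ∀ i : ℤ,
        (C i ⧸ Submodule.comap (C i).subtype (C (i - 1))) →ₗ[ℚ]
          (C (N - i) ⧸ Submodule.comap (C (N - i)).subtype (C (N - i - 1))) →ₗ[ℚ] ℚ,
      (∀ (i : ℤ) (v : C i) (w : C (N - i)),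
        Bgr i (Submodule.Quotient.mk v) (Submodule.Quotient.mk w) = B v w) ∧
      (∀ (i : ℤ) (x : C i ⧸ Submodule.comap (C i).subtype (C (i - 1))),
        (∀ y, Bgr i x y = 0) → x = 0) ∧
      (∀ (i : ℤ) (y : C (N - i) ⧸ Submodule.comap (C (N - i)).subtype (C (N - i - 1))),
        (∀ x, Bgr i x y = 0) → y = 0) :=
  stmt0_general V C hmono hneg hexh B hperf N hvanish hsym
end

section
/- Let H = ⊕_{k} H^k be a finite-dimensional graded ℚ-vector space, let K, N be natural numbers, and let ⟨−,−⟩ : H × H → ℚ be a perfect bilinear pairing with ⟨H^k, H^{k'}⟩ = 0 whenever k + k' ≠ K. Let (C_ℓ H)_{ℓ ∈ ℕ} be an increasing filtration of H by subspaces, compatible with the grading (i.e. C_ℓ H = ⊕_k (C_ℓ H ∩ H^k)), such that ⟨v, w⟩ = 0 whenever v ∈ C_i H, w ∈ C_j H and i + j < N. Suppose there exists a basis B of H consisting of homogeneous elements, an involution v ↦ v̌ of B, and functions ℓ, k : B → ℕ such that: (i) ⟨v, u⟩ = 0 for every u ∈ B with u ≠ v̌, and ⟨v, v̌⟩ ≠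 0; (ii) v ∈ C_{ℓ(v)} H ∩ H^{k(v)} for every v ∈ B; and (iii) ℓ(v) + ℓ(v̌) = N for every v ∈ B. Then for all ℓ₀, k₀: dim ((C_{ℓ₀} H ∩ H^{k₀}) / (C_{ℓ₀-1} H ∩ H^{k₀})) = #{v ∈ B : k(v) = k₀ and ℓ(v) = ℓ₀}. -/
/-!
Because the basis is anti-diagonal for the pairing, the coefficient of `b v` in any `x` is read off
from `⟨x, b v̌⟩`. For `x ∈ C_ℓ H ∩ H^{k₀}` this pairing vanishes unless `k(v) = k₀` (degrees of
`x` and `b v̌` must add up to `K`) and `ℓ(v) ≤ ℓ` (otherwise `ℓ + ℓ(v̌) < N`). Hence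
`C_ℓ H ∩ H^{k₀}` is spanned by the basis vectors with `k(v) = k₀` and `ℓ(v) ≤ ℓ`, and the
graded piece has dimension the number of those with `ℓ(v) = ℓ₀`.
-/

open Module Submodule

theorem Submodule.finrank_quotient_comap_subtype_add_finrank {K V : Type*} [DivisionRing K]
    [AddCommGroup V] [Module K V] {W' W : Submodule K V} [Module.Finite K W] (h : W' ≤ W) :
    finrank K (W ⧸ W'.comap W.subtype) + finrank K W' = finrank K W := by
  rw [← (comapSubtypeEquivOfLe h).finrank_eq]
  exact (W'.comap W.subtype).finrank_quotient_add_finrank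

namespace Module.Basis

section Semiring

variable {ι R M : Type*} [Semiring R] [AddCommMonoid M] [Module R M] (b : Basis ι R M)

theorem eq_span_image_of_repr_eq_zero {W : Submodule R M} {s : Set ι} (hmem : ∀ i ∈ s, b i ∈ W)
    (hrepr : ∀ x ∈ W, ∀ i ∉ s, b.repr x i = 0) : W = span R (b '' s) :=
  le_antisymm
    (fun x hx ↦ b.mem_span_image.2 fun i hi ↦
      by_contra fun hs ↦ Finsupp.mem_support_iff.1 hi (hrepr x hx i hs))
    (span_le.2 (Set.image_subset_iff.2 hmem))

theorem finrank_span_image [Nontrivial R] [StrongRankCondition R] (s : Set ι) [Finite s] :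
    finrank R (span R (b '' s)) = s.ncard := by
  have := Fintype.ofFinite s
  have hli : LinearIndependent R fun i : s ↦ b i :=
    b.linearIndependent.comp _ Subtype.val_injective
  rw [Set.image_eq_range, finrank_span_eq_card hli, Set.ncard_eq_toFinset_card', Set.toFinset_card]

end Semiring

theorem repr_eq_zero_of_apply_inv_eq_zero {ι R M : Type*} [CommSemiring R] [NoZeroDivisors R]
    [AddCommMonoid M] [Module R M] (b : Basis ι R M) (B : M →ₗ[R] M →ₗ[R] R)
    {inv : ι → ι} (hinv : Function.Involutive inv)
    (hanti : ∀ v u, u ≠ inv v → B (b v) (b u) = 0) {v : ι} (hv : B (b v) (b (inv v)) ≠ 0)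
    {x : M} (hx : B x (b (inv v)) = 0) : b.repr x v = 0 := by
  have hcoord : B.flip (b (inv v)) = B (b v) (b (inv v)) • b.coord v := by
    refine b.ext fun i ↦ ?_
    obtain rfl | hi := eq_or_ne i v
    · simp
    · simp [hanti i (inv v) (hinv.injective.ne hi.symm), Finsupp.single_eq_of_ne' hi]
  have := congr($hcoord x)
  simp only [LinearMap.flip_apply, hx, LinearMap.smul_apply, coord_apply, smul_eq_mul] at this
  exact (mul_eq_zero.1 this.symm).resolve_left hv

theorem finrank_quotient_span_image {K V ι : Type*} [DivisionRing K]
    [AddCommGroup V] [Module K V] (b : Basis ι K V) {s' s : Set ι} (h : s' ⊆ s) [Finite s] :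
    finrank K (span K (b '' s) ⧸ (span K (b '' s')).comap (span K (b '' s)).subtype)
      = (s \ s').ncard := by
  have : Finite s' := Finite.Set.subset s h
  have : FiniteDimensional K (span K (b '' s)) :=
    FiniteDimensional.span_of_finite K ((Set.toFinite s).image b)
  have hq := finrank_quotient_comap_subtype_add_finrank
    (span_mono (R := K) (Set.image_mono (f := b) h))
  rw [b.finrank_span_image, b.finrank_span_image, ← Set.ncard_sdiff_add_ncard_of_subset h] at hq
  omega

end Module.Basis

theorem inf_eq_span_basis_image_of_antidiagonal {F H ι : Type*} [Field F] [AddCommGroup H]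
    [Module F H] {Hgr : ℕ → Submodule F H} {K N : ℕ} {B : H →ₗ[F] H →ₗ[F] F}
    (hdeg : ∀ k k' : ℕ, k + k' ≠ K → ∀ v ∈ Hgr k, ∀ w ∈ Hgr k', B v w = 0)
    {C : ℤ → Submodule F H} (hmono : Monotone C)
    (hvanish : ∀ i j : ℤ, i + j < (N : ℤ) → ∀ v ∈ C i, ∀ w ∈ C j, B v w = 0)
    (b : Basis ι F H) {inv : ι → ι} (hinv : Function.Involutive inv) {lf kf : ι → ℕ}
    (hanti₁ : ∀ v u : ι, u ≠ inv v → B (b v) (b u) = 0)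
    (hanti₂ : ∀ v : ι, B (b v) (b (inv v)) ≠ 0)
    (hmem : ∀ v : ι, b v ∈ C (lf v) ⊓ Hgr (kf v))
    (hlsum : ∀ v : ι, lf v + lf (inv v) = N) (ℓ : ℤ) (k : ℕ) :
    C ℓ ⊓ Hgr k = span F (b '' {v | kf v = k ∧ (lf v : ℤ) ≤ ℓ}) := by
  refine b.eq_span_image_of_repr_eq_zero
    (fun v hv ↦ ⟨hmono hv.2 (hmem v).1, hv.1 ▸ (hmem v).2⟩) fun x hx v hv ↦ ?_
  refine b.repr_eq_zero_of_apply_inv_eq_zero B hinv hanti₁ (hanti₂ v) ?_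
  by_cases hk : kf v = k
  · have hℓ : ℓ < lf v := by simpa [hk] using hv
    exact hvanish ℓ _ (by have := hlsum v; omega) x hx.1 _ (hmem (inv v)).1
  · have hK : kf v + kf (inv v) = K := by_contra fun h ↦
      hanti₂ v (hdeg _ _ h _ (hmem v).2 _ (hmem (inv v)).2)
    exact hdeg k _ (by omega) x hx.2 _ (hmem (inv v)).2

theorem stmt1_general (H : Type*) [AddCommGroup H] [Module ℚ H] [FiniteDimensional ℚ H]
    (Hgr : ℕ → Submodule ℚ H)
    (K N : ℕ)
    (B : H →ₗ[ℚ] H →ₗ[ℚ] ℚ)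
    (hdeg : ∀ k k' : ℕ, k + k' ≠ K → ∀ v ∈ Hgr k, ∀ w ∈ Hgr k', B v w = 0)
    (C : ℤ → Submodule ℚ H) (hmono : Monotone C)
    (hvanish : ∀ i j : ℤ, i + j < (N : ℤ) → ∀ v ∈ C i, ∀ w ∈ C j, B v w = 0)
    (ι : Type*) (b : Module.Basis ι ℚ H)
    (inv : ι → ι) (hinv : ∀ v : ι, inv (inv v) = v)
    (lf kf : ι → ℕ)
    (hanti₁ : ∀ v u : ι, u ≠ inv v → B (b v) (b u) = 0)
    (hanti₂ : ∀ v : ι, B (b v) (b (inv v)) ≠ 0)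
    (hmem : ∀ v : ι, b v ∈ C (lf v) ⊓ Hgr (kf v))
    (hlsum : ∀ v : ι, lf v + lf (inv v) = N) :
    ∀ (ℓ₀ : ℤ) (k₀ : ℕ),
      Module.finrank ℚ
          (↥(C ℓ₀ ⊓ Hgr k₀) ⧸
            Submodule.comap (C ℓ₀ ⊓ Hgr k₀).subtype (C (ℓ₀ - 1) ⊓ Hgr k₀))
        = Nat.card {v : ι // kf v = k₀ ∧ (lf v : ℤ) = ℓ₀} := by
  intro ℓ₀ k₀
  have : Finite ι := Module.Finite.finite_basis b
  have hspan :=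
    inf_eq_span_basis_image_of_antidiagonal hdeg hmono hvanish b hinv hanti₁ hanti₂ hmem hlsum
  have hsub : {v | kf v = k₀ ∧ (lf v : ℤ) ≤ ℓ₀ - 1} ⊆ {v | kf v = k₀ ∧ (lf v : ℤ) ≤ ℓ₀} :=
    fun v hv ↦ ⟨hv.1, by linarith [hv.2]⟩
  have hdiff : {v | kf v = k₀ ∧ (lf v : ℤ) ≤ ℓ₀} \ {v | kf v = k₀ ∧ (lf v : ℤ) ≤ ℓ₀ - 1}
      = {v | kf v = k₀ ∧ (lf v : ℤ) = ℓ₀} := by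
    ext v
    simp only [Set.mem_sdiff, Set.mem_ofPred_eq]
    omega
  rw [hspan, hspan, b.finrank_quotient_span_image hsub, hdiff]
  rfl

theorem stmt1 (H : Type*) [AddCommGroup H] [Module ℚ H] [FiniteDimensional ℚ H]
    (Hgr : ℕ → Submodule ℚ H) (hinternal : DirectSum.IsInternal Hgr)
    (K N : ℕ)
    (B : H →ₗ[ℚ] H →ₗ[ℚ] ℚ)
    (hperf : Function.Bijective fun v : H => B v)
    (hdeg : ∀ k k' : ℕ, k + k' ≠ K → ∀ v ∈ Hgr k, ∀ w ∈ Hgr k', B v w = 0)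
    (C : ℤ → Submodule ℚ H) (hmono : Monotone C)
    (hneg : ∀ ℓ : ℤ, ℓ < 0 → C ℓ = ⊥)
    (hcompat : ∀ ℓ : ℤ, C ℓ = ⨆ k : ℕ, (C ℓ ⊓ Hgr k))
    (hvanish : ∀ i j : ℤ, i + j < (N : ℤ) → ∀ v ∈ C i, ∀ w ∈ C j, B v w = 0)
    (ι : Type*) (b : Module.Basis ι ℚ H)
    (inv : ι → ι) (hinv : ∀ v : ι, inv (inv v) = v)
    (lf kf : ι → ℕ)
    (hanti₁ : ∀ v u : ι, u ≠ inv v → B (b v) (b u) = 0)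
    (hanti₂ : ∀ v : ι, B (b v) (b (inv v)) ≠ 0)
    (hmem : ∀ v : ι, b v ∈ C (lf v) ⊓ Hgr (kf v))
    (hlsum : ∀ v : ι, lf v + lf (inv v) = N) :
    ∀ (ℓ₀ : ℤ) (k₀ : ℕ),
      Module.finrank ℚ
          (↥(C ℓ₀ ⊓ Hgr k₀) ⧸
            Submodule.comap (C ℓ₀ ⊓ Hgr k₀).subtype (C (ℓ₀ - 1) ⊓ Hgr k₀))
        = Nat.card {v : ι // kf v = k₀ ∧ (lf v : ℤ) = ℓ₀} :=
  stmt1_general H Hgr K N B hdeg C hmono hvanish ι b inv hinv lf kf hanti₁ hanti₂ hmem hlsum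
end

section
/- For every integer n ≥ 1, the following identity holds in the polynomial ring ℤ[u, v]: ( ∑_{(l,r,s) ∈ ℕ³ with l + r + s = n − 1} u^r · v^s · (1 + (uv)^l − δ_{l,0}) ) · (1 − u)(1 − v) = (1 − u^n)(1 − v^n), where δ_{l,0} = 1 if l = 0 and δ_{l,0} = 0 otherwise. -/
/-!
Both sides equal `(1 - u)(1 - v) ∑_{i, j < n} u^i v^j`. Indeed, the monomials `u^{r+l} v^{s+l}`
coming from `u^r v^s (uv)^l` are exactly the `u^i v^j` with `i, j < n` and `i + j ≥ n - 1`, each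
once, while the monomials `u^r v^s` with `l ≥ 1` are exactly those with `i + j < n - 1`.
-/

open MvPolynomial

section

variable {R : Type*} [CommRing R] (u v : R) (n : ℕ)

lemma sum_triples_mul_pow_mul_pow_eq_sum_upper :
    ∑ t ∈ (Finset.range n ×ˢ Finset.range n ×ˢ Finset.range n).filter
        (fun t => t.1 + t.2.1 + t.2.2 = n - 1), u ^ t.2.1 * v ^ t.2.2 * (u * v) ^ t.1 =
      ∑ p ∈ (Finset.range n ×ˢ Finset.range n).filter (fun p => n ≤ p.1 + p.2 + 1),
        u ^ p.1 * v ^ p.2 := by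
  refine Finset.sum_nbij' (fun t => (t.2.1 + t.1, t.2.2 + t.1))
    (fun p => (p.1 + p.2 + 1 - n, n - 1 - p.2, n - 1 - p.1)) ?_ ?_ ?_ ?_ ?_
  · intro t ht
    simp only [Finset.mem_filter, Finset.mem_product, Finset.mem_range] at ht ⊢
    omega
  · intro p hp
    simp only [Finset.mem_filter, Finset.mem_product, Finset.mem_range] at hp ⊢
    omega
  · intro t ht
    simp only [Finset.mem_filter, Finset.mem_product, Finset.mem_range] at ht
    ext <;> simp only <;> omega
  · intro p hp
    simp only [Finset.mem_filter, Finset.mem_product, Finset.mem_range] at hp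
    ext <;> simp only <;> omega
  · intro t _
    ring

lemma sum_triples_pos_mul_pow_eq_sum_lower :
    ∑ t ∈ (Finset.range n ×ˢ Finset.range n ×ˢ Finset.range n).filter
        (fun t => t.1 + t.2.1 + t.2.2 = n - 1 ∧ t.1 ≠ 0), u ^ t.2.1 * v ^ t.2.2 =
      ∑ p ∈ (Finset.range n ×ˢ Finset.range n).filter (fun p => ¬ n ≤ p.1 + p.2 + 1),
        u ^ p.1 * v ^ p.2 := by
  refine Finset.sum_nbij' (fun t => (t.2.1, t.2.2)) (fun p => (n - 1 - p.1 - p.2, p.1, p.2))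
    ?_ ?_ ?_ ?_ ?_
  · intro t ht
    simp only [Finset.mem_filter, Finset.mem_product, Finset.mem_range] at ht ⊢
    omega
  · intro p hp
    simp only [Finset.mem_filter, Finset.mem_product, Finset.mem_range] at hp ⊢
    omega
  · intro t ht
    simp only [Finset.mem_filter, Finset.mem_product, Finset.mem_range] at ht
    ext <;> simp only
    omega
  · intro p _
    rfl
  · intro t _
    rfl

theorem sum_triples_eq_geom_sum_mul_geom_sum :
    ∑ t ∈ (Finset.range n ×ˢ Finset.range n ×ˢ Finset.range n).filter
        (fun t => t.1 + t.2.1 + t.2.2 = n - 1),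
        u ^ t.2.1 * v ^ t.2.2 * (1 + (u * v) ^ t.1 - if t.1 = 0 then 1 else 0) =
      (∑ i ∈ Finset.range n, u ^ i) * ∑ j ∈ Finset.range n, v ^ j := by
  have split_summand : ∀ l r s : ℕ, u ^ r * v ^ s * (1 + (u * v) ^ l - if l = 0 then 1 else 0) =
      u ^ r * v ^ s * (u * v) ^ l + if l ≠ 0 then u ^ r * v ^ s else 0 := by
    intro l r s
    rcases eq_or_ne l 0 with rfl | hl
    · simp
    · simp only [hl, if_false, ne_eq, not_false_eq_true, if_true]
      ring
  rw [Finset.sum_congr rfl fun t _ => split_summand t.1 t.2.1 t.2.2, Finset.sum_add_distrib,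
    ← Finset.sum_filter, Finset.filter_filter, sum_triples_mul_pow_mul_pow_eq_sum_upper,
    sum_triples_pos_mul_pow_eq_sum_lower, Finset.sum_filter_add_sum_filter_not,
    Finset.sum_mul_sum, Finset.sum_product]

end

theorem stmt2_general (n : ℕ) :
    (∑ t ∈ (Finset.range n ×ˢ Finset.range n ×ˢ Finset.range n).filter
        (fun t => t.1 + t.2.1 + t.2.2 = n - 1),
        (X 0 : MvPolynomial (Fin 2) ℤ) ^ t.2.1 * (X 1 : MvPolynomial (Fin 2) ℤ) ^ t.2.2 *
          (1 + ((X 0 : MvPolynomial (Fin 2) ℤ) * X 1) ^ t.1 -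
            if t.1 = 0 then 1 else 0)) *
      ((1 - (X 0 : MvPolynomial (Fin 2) ℤ)) * (1 - (X 1 : MvPolynomial (Fin 2) ℤ))) =
    (1 - (X 0 : MvPolynomial (Fin 2) ℤ) ^ n) * (1 - (X 1 : MvPolynomial (Fin 2) ℤ) ^ n) := by
  rw [sum_triples_eq_geom_sum_mul_geom_sum, ← geom_sum_mul_neg, ← geom_sum_mul_neg]
  ring

theorem stmt2 (n : ℕ) (hn : 1 ≤ n) :
    (∑ t ∈ (Finset.range n ×ˢ Finset.range n ×ˢ Finset.range n).filter
        (fun t => t.1 + t.2.1 + t.2.2 = n - 1),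
        (X 0 : MvPolynomial (Fin 2) ℤ) ^ t.2.1 * (X 1 : MvPolynomial (Fin 2) ℤ) ^ t.2.2 *
          (1 + ((X 0 : MvPolynomial (Fin 2) ℤ) * X 1) ^ t.1 -
            if t.1 = 0 then 1 else 0)) *
      ((1 - (X 0 : MvPolynomial (Fin 2) ℤ)) * (1 - (X 1 : MvPolynomial (Fin 2) ℤ))) =
    (1 - (X 0 : MvPolynomial (Fin 2) ℤ) ^ n) * (1 - (X 1 : MvPolynomial (Fin 2) ℤ) ^ n) :=
  stmt2_general n
end

section
/- For every integer g ≥ 2, the following identity holds in the polynomial ring ℤ[q, t]: ( ∑_{(p,l,r,s,h) ∈ ℕ⁵ with 2p + l + r + s + h = g − 1} 2^h · binom(g, h) · binom(g − h, p) · q^{2r + 2s + 2h + 4p} · t^{2s + h + 2p} · (1 + q^{4l} t^{2l} − δ_{l,0}) ) · (1 − q²)(1 − q² t²) = (1 + q² t)^{2g} − q^{2g} (1 + t)^{2g}, where δ_{l,0} = 1 if l = 0 and δ_{l,0} = 0 otherwise, and binom denotes the binomial coefficient. -/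
/-!
Put `u = q²t`, `a = q²`, `b = q²t²`, so that `u² = ab` and the summand is
`C(g,h) (2u)^h · C(g-h,p) (ab)^p · a^r b^s (1 + (ab)^l - δ_{l,0})`. For fixed `h, p` let
`m = g - 1 - h - 2p`; the sum over `l + r + s = m` is the sum of `a^i b^j` over the square
`0 ≤ i, j ≤ m`: the terms `a^r b^s` fill the triangle `i + j ≤ m`, and the terms
`(ab)^l a^r b^s` with `l ≥ 1` fill its mirror image `i + j > m` under `(r, s) ↦ (m - s, m - r)`.
Multiplied by `(1 - a)(1 - b)` it becomes `(1 - a^(m+1))(1 - b^(m+1))`. Pairing `p` with `n - p`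
in the binomial expansions gives
`(1 + ab)^n - (a + b)^n = ∑_{2p < n} C(n,p) (ab)^p (1 - a^(n-2p))(1 - b^(n-2p))`,
and summing over `h` with weights `C(g,h) (2u)^h` yields
`(2u + 1 + ab)^g - (2u + a + b)^g = (1 + u)^(2g) - q^(2g) (1 + t)^(2g)`.
-/

open Finset MvPolynomial

theorem Finset.sum_range_succ_eq_sum_range_half_add_reflect {M : Type*} [AddCommMonoid M]
    (f : ℕ → M) (n : ℕ) (hf : ∀ p, 2 * p = n → f p = 0) :
    ∑ p ∈ range (n + 1), f p = ∑ p ∈ range ((n + 1) / 2), (f p + f (n - p)) := by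
  have hlow : range ((n + 1) / 2) = (range (n + 1)).filter (fun p => 2 * p < n) := by
    ext; simp only [mem_range, mem_filter]; omega
  have hhigh : ∑ p ∈ range ((n + 1) / 2), f (n - p)
      = ∑ p ∈ (range (n + 1)).filter (fun p => n < 2 * p), f p :=
    sum_nbij' (n - ·) (n - ·) (by intro p; simp only [mem_range, mem_filter]; omega)
      (by intro p; simp only [mem_range, mem_filter]; omega)
      (by intro p; simp only [mem_range]; omega)
      (by intro p; simp only [mem_range, mem_filter]; omega) (fun _ _ => rfl)
  have hmid : ∑ p ∈ (range (n + 1)).filter (fun p => n < 2 * p), f p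
      = ∑ p ∈ (range (n + 1)).filter (fun p => ¬ 2 * p < n), f p :=
    sum_subset (by intro p; simp only [mem_range, mem_filter]; omega)
      (fun p hp hp' => hf p (by simp only [mem_range, mem_filter] at hp hp'; omega))
  rw [sum_add_distrib, hhigh, hmid, hlow, sum_filter_add_sum_filter_not]

def triangle (m : ℕ) : Finset (ℕ × ℕ) :=
  (range (m + 1) ×ˢ range (m + 1)).filter (fun rs => rs.1 + rs.2 ≤ m)

theorem sum_filter_quintuple_eq {M : Type*} [AddCommMonoid M] (g : ℕ)
    (f : ℕ × ℕ × ℕ × ℕ × ℕ → M) :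
    ∑ v ∈ (range g ×ˢ range g ×ˢ range g ×ˢ range g ×ˢ range g).filter
        (fun v => 2 * v.1 + v.2.1 + v.2.2.1 + v.2.2.2.1 + v.2.2.2.2 = g - 1), f v
      = ∑ h ∈ range g, ∑ p ∈ range ((g - h + 1) / 2),
          ∑ rs ∈ triangle (g - 1 - h - 2 * p),
            f (p, g - 1 - h - 2 * p - rs.1 - rs.2, rs.1, rs.2, h) := by
  simp_rw [sum_sigma']
  refine sum_nbij' (fun v => ⟨v.2.2.2.2, v.1, v.2.2.1, v.2.2.2.1⟩)
    (fun x => (x.2.1, g - 1 - x.1 - 2 * x.2.1 - x.2.2.1 - x.2.2.2, x.2.2.1, x.2.2.2, x.1))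
    ?_ ?_ ?_ ?_ ?_
  all_goals simp only [triangle, mem_filter, mem_product, mem_sigma, mem_range, Prod.forall,
    Sigma.forall]
  · intros; omega
  · intros; omega
  · intro p l r s h hv
    simp only [Prod.mk.injEq, and_true, true_and]
    omega
  · intros; trivial
  · intro p l r s h hv
    congr
    omega

section CommRing

variable {R : Type*} [CommRing R]

theorem one_add_mul_pow_sub_add_pow (a b : R) (n : ℕ) :
    (1 + a * b) ^ n - (a + b) ^ n = ∑ p ∈ range ((n + 1) / 2),
      (n.choose p : R) * (a * b) ^ p * ((1 - a ^ (n - 2 * p)) * (1 - b ^ (n - 2 * p))) := by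
  have hdiff : (1 + a * b) ^ n - (a + b) ^ n
      = ∑ p ∈ range (n + 1), (n.choose p : R) * b ^ p * (a ^ p - a ^ (n - p)) := by
    rw [add_comm (1 : R), add_comm a, add_pow, add_pow, ← sum_sub_distrib]
    refine sum_congr rfl fun p _ => ?_
    rw [one_pow, mul_one, mul_pow]
    ring
  rw [hdiff, sum_range_succ_eq_sum_range_half_add_reflect _ _
    (fun p hp => by rw [← hp]; simp [two_mul])]
  refine sum_congr rfl fun p hp => ?_
  obtain ⟨k, rfl⟩ : ∃ k, n = 2 * p + k :=
    ⟨n - 2 * p, by simp only [mem_range] at hp; omega⟩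
  rw [Nat.choose_symm (by omega), show 2 * p + k - (2 * p + k - p) = p by omega,
    show 2 * p + k - p = p + k by omega, Nat.add_sub_cancel_left]
  ring

def foldedTriangleSum (a b : R) (m : ℕ) : R :=
  ∑ rs ∈ triangle m,
    a ^ rs.1 * b ^ rs.2 * (1 + (a * b) ^ (m - rs.1 - rs.2) - if m - rs.1 - rs.2 = 0 then 1 else 0)

theorem foldedTriangleSum_eq (a b : R) (m : ℕ) :
    foldedTriangleSum a b m
      = (∑ i ∈ range (m + 1), a ^ i) * ∑ j ∈ range (m + 1), b ^ j := by
  have hsplit : foldedTriangleSum a b m = ∑ rs ∈ triangle m, a ^ rs.1 * b ^ rs.2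
      + ∑ rs ∈ (triangle m).filter (fun rs => rs.1 + rs.2 < m),
          a ^ rs.1 * b ^ rs.2 * (a * b) ^ (m - rs.1 - rs.2) := by
    rw [foldedTriangleSum, sum_filter (fun rs : ℕ × ℕ => rs.1 + rs.2 < m), ← sum_add_distrib]
    refine sum_congr rfl fun rs hrs => ?_
    simp only [triangle, mem_filter] at hrs
    by_cases h : rs.1 + rs.2 < m
    · rw [if_neg (by omega), if_pos h]; ring
    · rw [if_pos (by omega), if_neg h, show m - rs.1 - rs.2 = 0 by omega]; ring
  have hmirror : ∑ rs ∈ (triangle m).filter (fun rs => rs.1 + rs.2 < m),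
        a ^ rs.1 * b ^ rs.2 * (a * b) ^ (m - rs.1 - rs.2)
      = ∑ ij ∈ (range (m + 1) ×ˢ range (m + 1)).filter (fun ij => ¬ ij.1 + ij.2 ≤ m),
          a ^ ij.1 * b ^ ij.2 := by
    refine sum_nbij' (fun rs => (m - rs.2, m - rs.1)) (fun ij => (m - ij.2, m - ij.1))
      ?_ ?_ ?_ ?_ ?_
    all_goals simp only [triangle, mem_filter, mem_product, mem_range, Prod.forall, Prod.mk.injEq]
    all_goals try (intros; omega)
    intro r s hrs
    obtain ⟨k, rfl⟩ : ∃ k, m = r + s + k := ⟨m - r - s, by omega⟩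
    rw [show r + s + k - s = r + k by omega, show r + s + k - r = s + k by omega,
      Nat.add_sub_cancel_left]
    ring
  rw [hsplit, hmirror, triangle, sum_filter_add_sum_filter_not, sum_mul_sum, sum_product]

theorem foldedTriangleSum_mul (a b : R) (m : ℕ) :
    foldedTriangleSum a b m * ((1 - a) * (1 - b)) = (1 - a ^ (m + 1)) * (1 - b ^ (m + 1)) := by
  rw [foldedTriangleSum_eq, ← geom_sum_mul_neg a, ← geom_sum_mul_neg b]
  ring

theorem sum_choose_mul_foldedTriangleSum_mul (x a b : R) (g : ℕ) :
    (∑ h ∈ range g, ∑ p ∈ range ((g - h + 1) / 2),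
      (g.choose h : R) * x ^ h * (((g - h).choose p : R) * (a * b) ^ p *
        foldedTriangleSum a b (g - 1 - h - 2 * p))) * ((1 - a) * (1 - b))
      = (x + (1 + a * b)) ^ g - (x + (a + b)) ^ g := by
  have hterm : ∀ h ∈ range g, (∑ p ∈ range ((g - h + 1) / 2),
      (g.choose h : R) * x ^ h * (((g - h).choose p : R) * (a * b) ^ p *
        foldedTriangleSum a b (g - 1 - h - 2 * p))) * ((1 - a) * (1 - b))
      = (g.choose h : R) * x ^ h * ((1 + a * b) ^ (g - h) - (a + b) ^ (g - h)) := by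
    intro h hh
    rw [one_add_mul_pow_sub_add_pow, sum_mul, mul_sum]
    refine sum_congr rfl fun p hp => ?_
    simp only [mem_range] at hh hp
    rw [mul_assoc, mul_assoc, mul_assoc _ (foldedTriangleSum _ _ _), foldedTriangleSum_mul,
      show g - 1 - h - 2 * p + 1 = g - h - 2 * p by omega]
    ring
  rw [sum_mul, sum_congr rfl hterm, add_pow, add_pow, sum_range_succ, sum_range_succ,
    Nat.sub_self, pow_zero, pow_zero, add_sub_add_right_eq_sub, ← sum_sub_distrib]
  exact sum_congr rfl fun h _ => by ring

end CommRing

-- `ℤ[q, t]` is `MvPolynomial (Fin 2) ℤ` with `q = X 0`, `t = X 1`. Every solution of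
-- `2p + l + r + s + h = g - 1` has all entries `< g`, so summing over `(range g)⁵` loses nothing.
theorem stmt3_general (g : ℕ) :
    (∑ v ∈ (Finset.range g ×ˢ Finset.range g ×ˢ Finset.range g ×ˢ Finset.range g ×ˢ
          Finset.range g).filter
        (fun v => 2 * v.1 + v.2.1 + v.2.2.1 + v.2.2.2.1 + v.2.2.2.2 = g - 1),
        (2 : MvPolynomial (Fin 2) ℤ) ^ v.2.2.2.2 *
          (g.choose v.2.2.2.2 : MvPolynomial (Fin 2) ℤ) *
          ((g - v.2.2.2.2).choose v.1 : MvPolynomial (Fin 2) ℤ) *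
          (X 0 : MvPolynomial (Fin 2) ℤ) ^
            (2 * v.2.2.1 + 2 * v.2.2.2.1 + 2 * v.2.2.2.2 + 4 * v.1) *
          (X 1 : MvPolynomial (Fin 2) ℤ) ^ (2 * v.2.2.2.1 + v.2.2.2.2 + 2 * v.1) *
          (1 + (X 0 : MvPolynomial (Fin 2) ℤ) ^ (4 * v.2.1) *
              (X 1 : MvPolynomial (Fin 2) ℤ) ^ (2 * v.2.1) -
            if v.2.1 = 0 then 1 else 0)) *
      ((1 - (X 0 : MvPolynomial (Fin 2) ℤ) ^ 2) *
        (1 - (X 0 : MvPolynomial (Fin 2) ℤ) ^ 2 * (X 1 : MvPolynomial (Fin 2) ℤ) ^ 2)) =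
    (1 + (X 0 : MvPolynomial (Fin 2) ℤ) ^ 2 * (X 1 : MvPolynomial (Fin 2) ℤ)) ^ (2 * g) -
      (X 0 : MvPolynomial (Fin 2) ℤ) ^ (2 * g) *
        (1 + (X 1 : MvPolynomial (Fin 2) ℤ)) ^ (2 * g) := by
  set q : MvPolynomial (Fin 2) ℤ := X 0
  set t : MvPolynomial (Fin 2) ℤ := X 1
  have hsquare : (1 + q ^ 2 * t) ^ (2 * g)
      = (2 * (q ^ 2 * t) + (1 + q ^ 2 * (q ^ 2 * t ^ 2))) ^ g := by
    rw [pow_mul]; ring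
  have hfactor : q ^ (2 * g) * (1 + t) ^ (2 * g)
      = (2 * (q ^ 2 * t) + (q ^ 2 + q ^ 2 * t ^ 2)) ^ g := by
    rw [pow_mul, pow_mul, ← mul_pow]; ring
  rw [sum_filter_quintuple_eq, hsquare, hfactor, ← sum_choose_mul_foldedTriangleSum_mul]
  congr 1
  refine sum_congr rfl fun h _ => sum_congr rfl fun p _ => ?_
  rw [foldedTriangleSum, mul_sum, mul_sum]
  exact sum_congr rfl fun rs _ => by ring

theorem stmt3 (g : ℕ) (hg : 2 ≤ g) :
    (∑ v ∈ (Finset.range g ×ˢ Finset.range g ×ˢ Finset.range g ×ˢ Finset.range g ×ˢ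
          Finset.range g).filter
        (fun v => 2 * v.1 + v.2.1 + v.2.2.1 + v.2.2.2.1 + v.2.2.2.2 = g - 1),
        (2 : MvPolynomial (Fin 2) ℤ) ^ v.2.2.2.2 *
          (g.choose v.2.2.2.2 : MvPolynomial (Fin 2) ℤ) *
          ((g - v.2.2.2.2).choose v.1 : MvPolynomial (Fin 2) ℤ) *
          (X 0 : MvPolynomial (Fin 2) ℤ) ^
            (2 * v.2.2.1 + 2 * v.2.2.2.1 + 2 * v.2.2.2.2 + 4 * v.1) *
          (X 1 : MvPolynomial (Fin 2) ℤ) ^ (2 * v.2.2.2.1 + v.2.2.2.2 + 2 * v.1) *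
          (1 + (X 0 : MvPolynomial (Fin 2) ℤ) ^ (4 * v.2.1) *
              (X 1 : MvPolynomial (Fin 2) ℤ) ^ (2 * v.2.1) -
            if v.2.1 = 0 then 1 else 0)) *
      ((1 - (X 0 : MvPolynomial (Fin 2) ℤ) ^ 2) *
        (1 - (X 0 : MvPolynomial (Fin 2) ℤ) ^ 2 * (X 1 : MvPolynomial (Fin 2) ℤ) ^ 2)) =
    (1 + (X 0 : MvPolynomial (Fin 2) ℤ) ^ 2 * (X 1 : MvPolynomial (Fin 2) ℤ)) ^ (2 * g) -
      (X 0 : MvPolynomial (Fin 2) ℤ) ^ (2 * g) *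
        (1 + (X 1 : MvPolynomial (Fin 2) ℤ)) ^ (2 * g) :=
  stmt3_general g
end

section
/- Let g ≥ 2 be an integer. In the field ℚ(q, t) of rational functions in two variables over ℚ, set Ω = ((1 + q² t)^{2g} − q^{2g} (1 + t)^{2g}) / ((1 − q²)(1 − q² t²)). Let ι be the ℚ-algebra automorphism of ℚ(q, t) determined by ι(q) = q⁻¹ and ι(t) = t⁻¹. Then q^{4g−4} · t^{2g−2} · ι(Ω) = Ω. -/
/-!
Statement 4: the 'curious' symmetry of the refined Poincaré polynomial of `N_{2,1}`
(Theorem 0.2 of the paper), stated as a rational-function identity in the field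
`ℚ(q, t) = FractionRing (MvPolynomial (Fin 2) ℚ)`, with `q = X 0` and `t = X 1`.
-/

noncomputable section

/-- The field `ℚ(q, t)` of rational functions in two variables. -/
abbrev RatFuncQT : Type := FractionRing (MvPolynomial (Fin 2) ℚ)

/-- The variable `q ∈ ℚ(q, t)`. -/
def qq : RatFuncQT := algebraMap (MvPolynomial (Fin 2) ℚ) RatFuncQT (MvPolynomial.X 0)

/-- The variable `t ∈ ℚ(q, t)`. -/
def tt : RatFuncQT := algebraMap (MvPolynomial (Fin 2) ℚ) RatFuncQT (MvPolynomial.X 1)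

/-!
Put `u = q²t`. The numerator of `Ω` is `a^{2g} − b^{2g}` with `a = 1 + q²t` and `b = q(1 + t)`,
and inverting `q` and `t` multiplies both `a` and `b` by `u⁻¹`, while it multiplies the
denominator `(1 − q²)(1 − q²t²)` by `u⁻²`. Hence `ι(Ω) = u^{2−2g} Ω`, and `q^{4g−4} t^{2g−2}` is
exactly `u^{2g−2}`.
-/

section PoincareN21

variable {K : Type*} [Field K]

def poincareN21 (g : ℕ) (q t : K) : K :=
  ((1 + q ^ 2 * t) ^ (2 * g) - q ^ (2 * g) * (1 + t) ^ (2 * g)) /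
    ((1 - q ^ 2) * (1 - q ^ 2 * t ^ 2))

theorem map_poincareN21 {L F : Type*} [Field L] [FunLike F K L] [RingHomClass F K L]
    (f : F) (g : ℕ) (q t : K) : f (poincareN21 g q t) = poincareN21 g (f q) (f t) := by
  simp [poincareN21, map_div₀]

theorem poincareN21_inv_inv {g : ℕ} (hg : 1 ≤ g) {q t : K} (hq : q ≠ 0) (ht : t ≠ 0) :
    (q ^ 2 * t) ^ (2 * g - 2) * poincareN21 g q⁻¹ t⁻¹ = poincareN21 g q t := by
  have ha : 1 + q⁻¹ ^ 2 * t⁻¹ = (q ^ 2 * t)⁻¹ * (1 + q ^ 2 * t) := by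
    field_simp
    ring
  have hb : q⁻¹ * (1 + t⁻¹) = (q ^ 2 * t)⁻¹ * (q * (1 + t)) := by
    field_simp
    ring
  have hnum : (1 + q⁻¹ ^ 2 * t⁻¹) ^ (2 * g) - q⁻¹ ^ (2 * g) * (1 + t⁻¹) ^ (2 * g) =
      (q ^ 2 * t)⁻¹ ^ (2 * g) *
        ((1 + q ^ 2 * t) ^ (2 * g) - q ^ (2 * g) * (1 + t) ^ (2 * g)) := by
    rw [← mul_pow, ha, hb, mul_pow, mul_pow, mul_pow, mul_sub]
  have hden : (1 - q⁻¹ ^ 2) * (1 - q⁻¹ ^ 2 * t⁻¹ ^ 2) =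
      (q ^ 2 * t)⁻¹ ^ 2 * ((1 - q ^ 2) * (1 - q ^ 2 * t ^ 2)) := by
    field_simp
    ring
  obtain ⟨k, rfl⟩ : ∃ k, g = k + 1 := ⟨g - 1, by omega⟩
  have hu : q ^ 2 * t ≠ 0 := by positivity
  rw [poincareN21, poincareN21, hnum, hden, show 2 * (k + 1) = 2 * k + 2 by ring, Nat.add_sub_cancel,
    pow_add, mul_assoc, mul_div_assoc, mul_div_mul_left _ _ (by positivity), ← mul_assoc,
    ← mul_pow, mul_inv_cancel₀ hu, one_pow, one_mul]

end PoincareN21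

theorem qq_ne_zero : qq ≠ 0 :=
  (map_ne_zero_iff _ (IsFractionRing.injective _ _)).mpr (MvPolynomial.X_ne_zero 0)

theorem tt_ne_zero : tt ≠ 0 :=
  (map_ne_zero_iff _ (IsFractionRing.injective _ _)).mpr (MvPolynomial.X_ne_zero 1)

/-- let `Ω = ((1+q²t)^{2g} − q^{2g}(1+t)^{2g}) / ((1−q²)(1−q²t²))` and let `ι`
be the `ℚ`-algebra automorphism of `ℚ(q,t)` with `ι(q) = q⁻¹`, `ι(t) = t⁻¹`.  Then
`q^{4g−4} t^{2g−2} ι(Ω) = Ω`. -/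
theorem stmt4 (g : ℕ) (hg : 2 ≤ g)
    (ι : RatFuncQT ≃ₐ[ℚ] RatFuncQT) (hq : ι qq = qq⁻¹) (ht : ι tt = tt⁻¹) :
    qq ^ (4 * g - 4) * tt ^ (2 * g - 2) *
        ι (((1 + qq ^ 2 * tt) ^ (2 * g) - qq ^ (2 * g) * (1 + tt) ^ (2 * g)) /
          ((1 - qq ^ 2) * (1 - qq ^ 2 * tt ^ 2))) =
      ((1 + qq ^ 2 * tt) ^ (2 * g) - qq ^ (2 * g) * (1 + tt) ^ (2 * g)) /
        ((1 - qq ^ 2) * (1 - qq ^ 2 * tt ^ 2)) := by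
  have hscale : qq ^ (4 * g - 4) * tt ^ (2 * g - 2) = (qq ^ 2 * tt) ^ (2 * g - 2) := by
    rw [mul_pow, ← pow_mul, show 2 * (2 * g - 2) = 4 * g - 4 by omega]
  change qq ^ (4 * g - 4) * tt ^ (2 * g - 2) * ι (poincareN21 g qq tt) = poincareN21 g qq tt
  rw [hscale, map_poincareN21, hq, ht]
  exact poincareN21_inv_inv (by omega) qq_ne_zero tt_ne_zero

end
end

section
/- Let V = V₀ ⊕ V₁ be a ℤ/2-graded ℚ-vector space with a bilinear pairing ⟨−,−⟩ : V × V → ℚ. Call a linear operator F : V → V pure of parity |F| ∈ {0,1} if F(V_ε) ⊆ V_{ε+|F|} for both ε, and call a pure operator F (+)-self-adjoint (resp. (−)-self-adjoint) if ⟨F(x), y⟩ = (−1)^{|F|·|x|}⟨x, F(y)⟩ (resp. ⟨F(x), y⟩ = −(−1)^{|F|·|x|}⟨x, F(y)⟩) for all homogeneous x, y ∈ V. Suppose 𝟙 ∈ V₀ and {G_s}_{s ∈ S} is a family of pure (+)-self-adjoint operators such that V is spanned by the vectors G_{s₁}∘⋯∘G_{s_n}(𝟙) over all n ≥ 0 and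 s₁,…,s_n ∈ S. Then a pure operator F is (±)-self-adjoint if and only if: (i) ⟨F(𝟙), D⟩ = ±⟨𝟙, F(D)⟩ for all D ∈ V; and (ii) for every s ∈ S the super-commutator [F, G_s] = F∘G_s − (−1)^{|F|·|G_s|} G_s∘F is (∓)-self-adjoint. -/
/-!
For homogeneous `x` write `D_F(x, y) = ⟨F x, y⟩ - s (-1)^{|F||x|} ⟨x, F y⟩`. Expanding the
super-commutator and using that `G` is `(+)`-self-adjoint gives, for homogeneous `x, y`,
`D_F(G x, y) = D_{[F,G]}(x, y) + (-1)^{|G||x|} D_F(x, G y)`, where `[F, G]` is measured with the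
sign `-s`. If `F` is `(±)`-self-adjoint both `F`-defects vanish, so `[F, G]` is `(∓)`-self-adjoint.
Conversely, (i) says `D_F(𝟙, ·) = 0`, and the identity propagates `D_F(x, ·) = 0` from `x` to
`G_s x`, hence to every word `G_{s₁} ⋯ G_{s_n} 𝟙`. Twisting `x` by `(-1)^{|F||x|}` makes the
defect linear in `x`, so it vanishes on the span of the words, which is `V`.
-/

noncomputable section

variable {V : Type*} [AddCommGroup V] [Module ℚ V]

/-- The two graded pieces of the grading determined by `V0, V1`. -/
def gradePiece (V0 V1 : Submodule ℚ V) : ZMod 2 → Submodule ℚ V :=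
  fun ε => if ε = 0 then V0 else V1

/-- The sign `(−1)^ε` of a parity `ε ∈ ℤ/2`. -/
def parSign (ε : ZMod 2) : ℚ := if ε = 0 then 1 else -1

/-- An operator `F` is pure of parity `p` if `F(V_ε) ⊆ V_{ε+p}` for both `ε`. -/
def IsPureOp (V0 V1 : Submodule ℚ V) (F : V →ₗ[ℚ] V) (p : ZMod 2) : Prop :=
  ∀ ε : ZMod 2, ∀ x ∈ gradePiece V0 V1 ε, F x ∈ gradePiece V0 V1 (ε + p)

/-- A pure operator `F` of parity `p` is `s`-self-adjoint (for a sign `s = ±1`) with respect to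
the pairing `B` if `⟨F x, y⟩ = s (−1)^{|F||x|} ⟨x, F y⟩` for all homogeneous `x, y`. -/
def IsSignedSelfAdjoint (V0 V1 : Submodule ℚ V) (B : V →ₗ[ℚ] V →ₗ[ℚ] ℚ) (s : ℚ)
    (F : V →ₗ[ℚ] V) (p : ZMod 2) : Prop :=
  ∀ εx : ZMod 2, ∀ x ∈ gradePiece V0 V1 εx, ∀ εy : ZMod 2, ∀ y ∈ gradePiece V0 V1 εy,
    B (F x) y = s * parSign (p * εx) * B x (F y)

/-- The super-commutator `[F, G] = F ∘ G − (−1)^{|F||G|} G ∘ F` of pure operators of parities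
`pF`, `pG`. -/
def superComm (F : V →ₗ[ℚ] V) (pF : ZMod 2) (G : V →ₗ[ℚ] V) (pG : ZMod 2) : V →ₗ[ℚ] V :=
  F ∘ₗ G - parSign (pF * pG) • (G ∘ₗ F)

@[simp]
lemma gradePiece_zero (V0 V1 : Submodule ℚ V) : gradePiece V0 V1 0 = V0 := if_pos rfl

@[simp]
lemma gradePiece_one (V0 V1 : Submodule ℚ V) : gradePiece V0 V1 1 = V1 := if_neg one_ne_zero

lemma ZMod.eq_zero_or_eq_one : ∀ a : ZMod 2, a = 0 ∨ a = 1 := by decide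

section Grading

variable {V0 V1 : Submodule ℚ V}

lemma IsPureOp.foldr_comp_apply_mem {S : Type*} {G : S → V →ₗ[ℚ] V} {pG : S → ZMod 2}
    (hG : ∀ t, IsPureOp V0 V1 (G t) (pG t)) {ε : ZMod 2} {x : V}
    (hx : x ∈ gradePiece V0 V1 ε) (ls : List S) :
    ((ls.map G).foldr (· ∘ₗ ·) LinearMap.id) x ∈ gradePiece V0 V1 (ε + (ls.map pG).sum) := by
  induction ls with
  | nil => simpa using hx
  | cons t ls ih =>
    simpa only [List.map_cons, List.foldr_cons, List.sum_cons, LinearMap.comp_apply,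
      add_left_comm, add_comm] using hG t _ _ ih

lemma LinearMap.ext_of_gradePiece (hcod : Codisjoint V0 V1) {M : Type*} [AddCommGroup M]
    [Module ℚ M] {f g : V →ₗ[ℚ] M} (h : ∀ ε, ∀ y ∈ gradePiece V0 V1 ε, f y = g y) : f = g :=
  LinearMap.ext_on_codisjoint hcod (fun y hy => h 0 y (by simpa using hy))
    (fun y hy => h 1 y (by simpa using hy))

def parityTwist (hgrading : IsCompl V0 V1) (p : ZMod 2) : V →ₗ[ℚ] V :=
  LinearMap.ofIsCompl hgrading V0.subtype (parSign p • V1.subtype)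

lemma parityTwist_apply (hgrading : IsCompl V0 V1) (p : ZMod 2) {ε : ZMod 2} {x : V}
    (hx : x ∈ gradePiece V0 V1 ε) : parityTwist hgrading p x = parSign (p * ε) • x := by
  rcases ε.eq_zero_or_eq_one with rfl | rfl
  · simpa [parityTwist, parSign] using LinearMap.ofIsCompl_apply_left hgrading (φ := V0.subtype)
      (ψ := parSign p • V1.subtype) ⟨x, by simpa using hx⟩
  · simpa [parityTwist] using LinearMap.ofIsCompl_apply_right hgrading (φ := V0.subtype)
      (ψ := parSign p • V1.subtype) ⟨x, by simpa using hx⟩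

end Grading

section SelfAdjoint

variable {V0 V1 : Submodule ℚ V} {B : V →ₗ[ℚ] V →ₗ[ℚ] ℚ} {s : ℚ} {F G : V →ₗ[ℚ] V}

lemma IsSignedSelfAdjoint.apply_of_mem_left (hgrading : IsCompl V0 V1) {p ε : ZMod 2} {x : V}
    (hF : IsSignedSelfAdjoint V0 V1 B s F p) (hx : x ∈ gradePiece V0 V1 ε) (y : V) :
    B (F x) y = s * parSign (p * ε) * B x (F y) := by
  have h := LinearMap.ext_of_gradePiece hgrading.codisjoint (f := B (F x))
    (g := (s * parSign (p * ε)) • B.compl₂ F x) fun εy y hy => hF ε x hx εy y hy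
  simpa [mul_assoc] using LinearMap.congr_fun h y

lemma isSignedSelfAdjoint_of_comp_eq (hgrading : IsCompl V0 V1) {p : ZMod 2}
    (h : B ∘ₗ F = s • B.compl₂ F ∘ₗ parityTwist hgrading p) :
    IsSignedSelfAdjoint V0 V1 B s F p := by
  intro εx x hx εy y hy
  simpa [parityTwist_apply hgrading p hx, mul_assoc] using LinearMap.congr_fun₂ h x y

lemma superComm_defect {f g e εy : ZMod 2} {x y : V} (hFpure : IsPureOp V0 V1 F f)
    (hGsa : IsSignedSelfAdjoint V0 V1 B 1 G g) (hx : x ∈ gradePiece V0 V1 e)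
    (hy : y ∈ gradePiece V0 V1 εy) :
    B (F (G x)) y - s * parSign (f * (e + g)) * B (G x) (F y) =
      (B (superComm F f G g x) y - -s * parSign ((f + g) * e) * B x (superComm F f G g y)) +
        parSign (g * e) * (B (F x) (G y) - s * parSign (f * e) * B x (F (G y))) := by
  have hGFx := hGsa _ (F x) (hFpure e x hx) εy y hy
  have hGx := hGsa e x hx _ (F y) (hFpure εy y hy)
  simp only [superComm, LinearMap.sub_apply, LinearMap.smul_apply, LinearMap.comp_apply,
    map_sub, map_smul, smul_eq_mul, hGFx, hGx]
  rcases f.eq_zero_or_eq_one with rfl | rfl <;> rcases g.eq_zero_or_eq_one with rfl | rfl <;>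
    rcases e.eq_zero_or_eq_one with rfl | rfl <;>
    simp [parSign, (by decide : (1 + 1 : ZMod 2) = 0)] <;> ring

lemma IsSignedSelfAdjoint.superComm {f g : ZMod 2} (hF : IsSignedSelfAdjoint V0 V1 B s F f)
    (hFpure : IsPureOp V0 V1 F f) (hGpure : IsPureOp V0 V1 G g)
    (hGsa : IsSignedSelfAdjoint V0 V1 B 1 G g) :
    IsSignedSelfAdjoint V0 V1 B (-s) (superComm F f G g) (f + g) := by
  intro e x hx εy y hy
  have key := superComm_defect (s := s) hFpure hGsa hx hy
  rw [hF _ (G x) (hGpure e x hx) εy y hy, hF e x hx _ (G y) (hGpure εy y hy)] at key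
  linear_combination -key

lemma apply_comp_left_of_superComm (hgrading : IsCompl V0 V1) {f g e : ZMod 2} {x : V}
    (hFpure : IsPureOp V0 V1 F f) (hGsa : IsSignedSelfAdjoint V0 V1 B 1 G g)
    (hC : IsSignedSelfAdjoint V0 V1 B (-s) (superComm F f G g) (f + g))
    (hx : x ∈ gradePiece V0 V1 e) (hFx : ∀ y, B (F x) y = s * parSign (f * e) * B x (F y))
    (y : V) : B (F (G x)) y = s * parSign (f * (e + g)) * B (G x) (F y) := by
  have h := LinearMap.ext_of_gradePiece hgrading.codisjoint (f := B (F (G x)))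
    (g := (s * parSign (f * (e + g))) • B.compl₂ F (G x)) fun εy y hy => by
      have key := superComm_defect (s := s) hFpure hGsa hx hy
      rw [hC e x hx εy y hy, hFx (G y)] at key
      simp only [LinearMap.smul_apply, LinearMap.compl₂_apply, smul_eq_mul]
      linear_combination key
  simpa [mul_assoc] using LinearMap.congr_fun h y

end SelfAdjoint

theorem stmt10_general (V0 V1 : Submodule ℚ V) (hgrading : IsCompl V0 V1)
    (B : V →ₗ[ℚ] V →ₗ[ℚ] ℚ)
    (one : V) (hone : one ∈ V0)
    (S : Type*) (G : S → (V →ₗ[ℚ] V)) (pG : S → ZMod 2)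
    (hGpure : ∀ s : S, IsPureOp V0 V1 (G s) (pG s))
    (hGsa : ∀ s : S, IsSignedSelfAdjoint V0 V1 B 1 (G s) (pG s))
    (hspan : ⊤ ≤ Submodule.span ℚ
      {x : V | ∃ ls : List S, x = ((ls.map G).foldr (· ∘ₗ ·) LinearMap.id) one})
    (F : V →ₗ[ℚ] V) (pF : ZMod 2) (hFpure : IsPureOp V0 V1 F pF)
    (s : ℚ) :
    IsSignedSelfAdjoint V0 V1 B s F pF ↔
      ((∀ D : V, B (F one) D = s * B one (F D)) ∧
        ∀ t : S, IsSignedSelfAdjoint V0 V1 B (-s) (superComm F pF (G t) (pG t)) (pF + pG t)) := by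
  have hone' : one ∈ gradePiece V0 V1 0 := by simpa using hone
  have hword_mem (ls : List S) :
      ((ls.map G).foldr (· ∘ₗ ·) LinearMap.id) one ∈ gradePiece V0 V1 (ls.map pG).sum := by
    simpa using IsPureOp.foldr_comp_apply_mem hGpure hone' ls
  constructor
  · intro hF
    exact ⟨fun D => by simpa [parSign] using hF.apply_of_mem_left hgrading hone' D,
      fun t => hF.superComm hFpure (hGpure t) (hGsa t)⟩
  · rintro ⟨hF_one, hFG⟩
    have hword (ls : List S) (y : V) :
        B (F (((ls.map G).foldr (· ∘ₗ ·) LinearMap.id) one)) y =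
          s * parSign (pF * (ls.map pG).sum) *
            B (((ls.map G).foldr (· ∘ₗ ·) LinearMap.id) one) (F y) := by
      induction ls generalizing y with
      | nil => simpa [parSign] using hF_one y
      | cons t ls ih =>
        simp only [List.map_cons, List.foldr_cons, LinearMap.comp_apply, List.sum_cons]
        rw [add_comm]
        exact apply_comp_left_of_superComm hgrading hFpure (hGsa t) (hFG t) (hword_mem ls) ih y
    refine isSignedSelfAdjoint_of_comp_eq hgrading (LinearMap.ext_on (top_le_iff.mp hspan) ?_)
    rintro _ ⟨ls, rfl⟩
    ext y
    simpa [parityTwist_apply hgrading pF (hword_mem ls), mul_assoc] using hword ls y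

/-- Lemma 5.5 of the paper: let `𝟙 ∈ V₀` and let `{G_s}_{s ∈ S}` be a family
of pure `(+)`-self-adjoint operators such that `V` is spanned by the iterates
`G_{s₁} ∘ ⋯ ∘ G_{s_n} (𝟙)`.  Then a pure operator `F` is `(±)`-self-adjoint if and only if
(i) `⟨F 𝟙, D⟩ = ±⟨𝟙, F D⟩` for all `D ∈ V`, and (ii) every super-commutator `[F, G_s]` is
`(∓)`-self-adjoint. -/
theorem stmt10 (V0 V1 : Submodule ℚ V) (hgrading : IsCompl V0 V1)
    (B : V →ₗ[ℚ] V →ₗ[ℚ] ℚ)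
    (one : V) (hone : one ∈ V0)
    (S : Type*) (G : S → (V →ₗ[ℚ] V)) (pG : S → ZMod 2)
    (hGpure : ∀ s : S, IsPureOp V0 V1 (G s) (pG s))
    (hGsa : ∀ s : S, IsSignedSelfAdjoint V0 V1 B 1 (G s) (pG s))
    (hspan : ⊤ ≤ Submodule.span ℚ
      {x : V | ∃ ls : List S, x = ((ls.map G).foldr (· ∘ₗ ·) LinearMap.id) one})
    (F : V →ₗ[ℚ] V) (pF : ZMod 2) (hFpure : IsPureOp V0 V1 F pF)
    (s : ℚ) (hs : s = 1 ∨ s = -1) :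
    IsSignedSelfAdjoint V0 V1 B s F pF ↔
      ((∀ D : V, B (F one) D = s * B one (F D)) ∧
        ∀ t : S, IsSignedSelfAdjoint V0 V1 B (-s) (superComm F pF (G t) (pG t)) (pF + pG t)) :=
  stmt10_general V0 V1 hgrading B one hone S G pG hGpure hGsa hspan F pF hFpure s

end
end

section
/- For every natural number m, the following identity holds in the polynomial ring ℤ[x, U, V]: ∑_{s=0}^{m} (−1)^s · binom(m, s) · (x−s)_{m−s} · ( ∑_{j=0}^{s} binom(s, j) · (x−j)_{s−j} · U^{s−j} · V^{j} ) = ∑_{j=0}^{m} binom(m, j) · (x−j)_{m−j} · (−V)^{j} · (1−U)^{m−j}, where (y)_n denotes the falling factorial y(y−1)⋯(y−n+1) (a polynomial in ℤ[x] when y = x−s), and binom denotes the binomial coefficient. -/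
/-!
Expand the product, swap the two sums and write `s = j + k`. For fixed `j`, the identities
`C(m, j+k) C(j+k, j) = C(m, j) C(m-j, k)` and `(x-j)_k (x-j-k)_{m-j-k} = (x-j)_{m-j}` pull
`C(m, j) (x-j)_{m-j} V^j` out of the inner sum, and what remains,
`∑_k (-1)^(j+k) C(m-j, k) U^k`, is `(-1)^j (1-U)^(m-j)` by the binomial theorem.
-/

open MvPolynomial Finset

noncomputable section

/-- The falling factorial `(y)_n = y (y−1) ⋯ (y−n+1)` of an element of a commutative ring. -/
def fall {R : Type*} [CommRing R] (y : R) (n : ℕ) : R :=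
  ∏ j ∈ Finset.range n, (y - (j : R))

theorem fall_add {R : Type*} [CommRing R] (y : R) (a b : ℕ) :
    fall y (a + b) = fall y a * fall (y - a) b := by
  rw [fall, prod_range_add]
  congr 1
  refine prod_congr rfl fun i _ => ?_
  push_cast
  ring

theorem fall_mul_fall_sub {R : Type*} [CommRing R] (y : R) {k n : ℕ} (hkn : k ≤ n) :
    fall y k * fall (y - k) (n - k) = fall y n := by
  rw [← fall_add, Nat.add_sub_cancel' hkn]

theorem sum_range_succ_sum_range_succ_comm {M : Type*} [AddCommMonoid M] (m : ℕ)
    (f : ℕ → ℕ → M) :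
    ∑ s ∈ range (m + 1), ∑ j ∈ range (s + 1), f s j =
      ∑ j ∈ range (m + 1), ∑ k ∈ range (m - j + 1), f (j + k) j := by
  simp only [range_eq_Ico]
  rw [← sum_Ico_Ico_comm 0 (m + 1) fun j s => f s j]
  refine sum_congr rfl fun j hj => ?_
  rw [sum_Ico_eq_sum_range, ← range_eq_Ico, Nat.sub_add_comm (Nat.lt_succ_iff.mp (mem_Ico.mp hj).2)]

theorem sum_choose_fall_mul_sum_choose_fall_eq {R : Type*} [CommRing R] (x U V : R) (m : ℕ) :
    ∑ s ∈ range (m + 1), (-1 : R) ^ s * (m.choose s : R) * fall (x - s) (m - s) *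
        (∑ j ∈ range (s + 1), (s.choose j : R) * fall (x - j) (s - j) * U ^ (s - j) * V ^ j) =
      ∑ j ∈ range (m + 1),
        (m.choose j : R) * fall (x - j) (m - j) * (-V) ^ j * (1 - U) ^ (m - j) := by
  simp_rw [mul_sum]
  rw [sum_range_succ_sum_range_succ_comm]
  refine sum_congr rfl fun j hj => ?_
  rw [show (1 : R) - U = -U + 1 by ring, add_pow, mul_sum]
  refine sum_congr rfl fun k hk => ?_
  have hjk : j + k ≤ m := by
    rw [mem_range] at hj hk
    omega
  have hchoose : (m.choose (j + k) : R) * ((j + k).choose j : R) =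
      (m.choose j : R) * ((m - j).choose k : R) := by
    have h := Nat.choose_mul (n := m) (Nat.le_add_right j k)
    rw [Nat.add_sub_cancel_left] at h
    rw [← Nat.cast_mul, ← Nat.cast_mul, h]
  have hfall : fall (x - j) k * fall (x - (j + k : ℕ)) (m - (j + k)) = fall (x - j) (m - j) := by
    rw [← fall_mul_fall_sub (x - j) (show k ≤ m - j by omega), Nat.sub_sub, sub_sub,
      Nat.cast_add]
  rw [Nat.add_sub_cancel_left, ← hfall, neg_pow, neg_pow U, pow_add]
  linear_combination ((-1 : R) ^ j * (-1) ^ k * fall (x - (j + k : ℕ)) (m - (j + k)) *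
    fall (x - j) k * U ^ k * V ^ j) * hchoose

/-- in `ℤ[x, U, V]`, for every natural number `m`,
`∑_{s=0}^m (−1)^s C(m,s) (x−s)_{m−s} ( ∑_{j=0}^s C(s,j) (x−j)_{s−j} U^{s−j} V^j )`
`= ∑_{j=0}^m C(m,j) (x−j)_{m−j} (−V)^j (1−U)^{m−j}`. -/
theorem stmt12 (m : ℕ) :
    ∑ s ∈ Finset.range (m + 1),
        (-1 : MvPolynomial (Fin 3) ℤ) ^ s * (m.choose s : MvPolynomial (Fin 3) ℤ) *
          fall ((X 0 : MvPolynomial (Fin 3) ℤ) - (s : MvPolynomial (Fin 3) ℤ)) (m - s) *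
          (∑ j ∈ Finset.range (s + 1),
            (s.choose j : MvPolynomial (Fin 3) ℤ) *
              fall ((X 0 : MvPolynomial (Fin 3) ℤ) - (j : MvPolynomial (Fin 3) ℤ)) (s - j) *
              (X 1 : MvPolynomial (Fin 3) ℤ) ^ (s - j) * (X 2 : MvPolynomial (Fin 3) ℤ) ^ j) =
      ∑ j ∈ Finset.range (m + 1),
        (m.choose j : MvPolynomial (Fin 3) ℤ) *
          fall ((X 0 : MvPolynomial (Fin 3) ℤ) - (j : MvPolynomial (Fin 3) ℤ)) (m - j) *
          (-(X 2 : MvPolynomial (Fin 3) ℤ)) ^ j *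
          (1 - (X 1 : MvPolynomial (Fin 3) ℤ)) ^ (m - j) :=
  sum_choose_fall_mul_sum_choose_fall_eq (X 0) (X 1) (X 2) m

end
end

section
/- For every natural number m, the following identity of formal power series in the variable z with coefficients in ℚ[x] holds: ∑_{p ≥ 0} (x−p)_m · z^p / p! = exp(z) · ∑_{j=0}^{m} (−1)^j · binom(m, j) · (x−j)_{m−j} · z^j, where (y)_n denotes the falling factorial y(y−1)⋯(y−n+1), exp(z) = ∑_{p≥0} z^p/p!, and binom denotes the binomial coefficient. -/
/-!
Comparing the coefficients of `z^p / p!`, and using `p! / (p-j)! = (p)_j`, the identity becomes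
`(x-p)_m = ∑_j (-1)^j C(m,j) (x-j)_{m-j} (p)_j`. The reflection `(y)_n = (-1)^n (n-1-y)_n` turns
this into the Chu–Vandermonde identity for `(p + (m-1-x))_m`.
-/

noncomputable section

open Finset Nat Polynomial

section Fall

variable {R : Type*} [CommRing R]

theorem fall_eq_eval_descPochhammer (y : R) (n : ℕ) : fall y n = (descPochhammer R n).eval y :=
  (descPochhammer_eval_eq_prod_range n y).symm

theorem fall_eq_smeval_descPochhammer (y : R) (n : ℕ) :
    fall y n = (descPochhammer ℤ n).smeval y := by
  rw [← aeval_eq_smeval, aeval_def, ← eval_map, descPochhammer_map, fall_eq_eval_descPochhammer]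

theorem fall_natCast (p n : ℕ) : fall (p : R) n = p.descFactorial n := by
  rw [fall_eq_smeval_descPochhammer, descPochhammer_smeval_eq_descFactorial]

theorem fall_add_s13 (r s : R) (n : ℕ) :
    fall (r + s) n = ∑ j ∈ range (n + 1), n.choose j * (fall r j * fall s (n - j)) := by
  simp only [fall_eq_smeval_descPochhammer]
  rw [Ring.descPochhammer_smeval_add n (Commute.all r s),
    Nat.sum_antidiagonal_eq_sum_range_succ (fun i j => (n.choose i : R) *
      ((descPochhammer ℤ i).smeval r * (descPochhammer ℤ j).smeval s))]

theorem fall_natCast_sub_one_sub (y : R) (n : ℕ) :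
    fall ((n : R) - 1 - y) n = (-1) ^ n * fall y n := by
  rw [fall_eq_eval_descPochhammer, fall_eq_eval_descPochhammer,
    descPochhammer_eval_eq_ascPochhammer, ← ascPochhammer_eval_neg_eq_descPochhammer]
  ring_nf

theorem fall_sub_natCast (y : R) (m p : ℕ) :
    fall (y - p) m = ∑ j ∈ range (m + 1),
      (-1) ^ j * m.choose j * fall (y - j) (m - j) * p.descFactorial j := by
  have hreflect : fall (y - p) m = (-1) ^ m * fall (p + ((m : R) - 1 - y)) m := by
    rw [← fall_natCast_sub_one_sub]; ring_nf
  rw [hreflect, fall_add_s13, mul_sum]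
  refine sum_congr rfl fun j hj => ?_
  have hjm : j ≤ m := Nat.lt_succ_iff.mp (mem_range.mp hj)
  have hreflect_j : fall ((m : R) - 1 - y) (m - j) = (-1) ^ (m - j) * fall (y - j) (m - j) := by
    rw [← fall_natCast_sub_one_sub, Nat.cast_sub hjm]; ring_nf
  have hsign : ((-1 : R) ^ m) * (-1) ^ (m - j) = (-1) ^ j := by
    rw [← Nat.add_sub_cancel' hjm, pow_add, Nat.add_sub_cancel_left, mul_assoc, ← mul_pow]
    simp
  rw [hreflect_j, fall_natCast]
  linear_combination (m.choose j * fall (y - j) (m - j) * p.descFactorial j : R) * hsign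

end Fall

theorem Nat.inv_factorial_mul_descFactorial {K : Type*} [Field K] [CharZero K] {p j : ℕ}
    (h : j ≤ p) : ((p ! : K))⁻¹ * p.descFactorial j = ((p - j)! : K)⁻¹ := by
  have hd : (p.descFactorial j : K) ≠ 0 := by exact_mod_cast (Nat.descFactorial_pos.mpr h).ne'
  rw [← Nat.factorial_mul_descFactorial h, Nat.cast_mul, mul_inv, mul_assoc,
    inv_mul_cancel₀ hd, mul_one]

theorem PowerSeries.coeff_exp_mul_C_mul_X_pow {A : Type*} [Ring A] [Algebra ℚ A] (a : A)
    (p j : ℕ) : coeff p (exp A * (C a * X ^ j)) = ((p ! : ℚ))⁻¹ • (a * p.descFactorial j) := by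
  rw [← mul_assoc, coeff_mul_X_pow', coeff_mul_C, coeff_exp]
  split_ifs with h
  · rw [← Nat.cast_comm, ← map_natCast (algebraMap ℚ A), Algebra.smul_def, ← mul_assoc,
      ← map_mul, Nat.inv_factorial_mul_descFactorial h, one_div]
  · rw [Nat.descFactorial_eq_zero_iff_lt.mpr (not_le.mp h)]
    simp

/-- for every natural number `m`, the power series over `ℚ[x]` whose `z^p`
coefficient is `(x−p)_m / p!` equals
`exp(z) · ∑_{j=0}^m (−1)^j C(m,j) (x−j)_{m−j} z^j`. -/
theorem stmt13 (m : ℕ) :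
    (PowerSeries.mk fun p : ℕ =>
        ((p.factorial : ℚ))⁻¹ • fall ((Polynomial.X : Polynomial ℚ) - (p : Polynomial ℚ)) m) =
      PowerSeries.exp (Polynomial ℚ) *
        ∑ j ∈ Finset.range (m + 1),
          PowerSeries.C
              ((-1 : Polynomial ℚ) ^ j * (m.choose j : Polynomial ℚ) *
                fall ((Polynomial.X : Polynomial ℚ) - (j : Polynomial ℚ)) (m - j)) *
            (PowerSeries.X : PowerSeries (Polynomial ℚ)) ^ j := by
  ext p : 1
  rw [PowerSeries.coeff_mk, mul_sum, map_sum, fall_sub_natCast, smul_sum]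
  exact sum_congr rfl fun j _ => (PowerSeries.coeff_exp_mul_C_mul_X_pow (A := ℚ[X]) _ p j).symm

end
end

section
/- Let g ≥ 2, d ≥ 1, l ≥ 0, m ≥ 0 be integers with l + m ≤ g. For every natural number k, define R_{k,m,l} ∈ ℚ[α, β, γ] by R_{k,m,l} = ∑ (g−l−c)! · α^a/a! · β^b/b! · (2γ)^c/c!, where the sum runs over all triples (a, b, c) ∈ ℕ³ with b + c = m and a + b + 2c = k − g − l (the empty sum being 0). Then the following two identities hold in ℚ[α, β, γ]: (1) ( −α·∂²/∂α² + (g+2d−1−l)·∂/∂α − 2γ·∂²/∂α∂γ + (1/2)·βγ·∂²/∂γ² − ((g−l)/2)·β·∂/∂γ )(R_{k,m,l}) = (2g+2d−k) · R_{k−1,m,l}; and (2) ( −β·∂²/∂β² + (g+2d−1−l)·∂/∂β − 2γ·∂²/∂β∂γ + (1/2)·αγ·∂²/∂γ² − ((g−l)/2)·α·∂/∂γ )(R_{k,m,l}) = (2g+2d−k) · R_{k−1,m−1,l} (where R_{k−1,m−1,l} = 0 when m = 0). -/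
/-!
Statement 15: the action of the (restrictions of the) deformed lowering operators `f_α^d`, `f_β^d`
on the invariant relations `R_{k,m,l} ∈ ℚ[α, β, γ]` (the computational core of Theorem 5.11 of
the paper).  We model `ℚ[α, β, γ]` as `MvPolynomial (Fin 3) ℚ` with `α = X 0`, `β = X 1`,
`γ = X 2`.  The condition `a + b + 2c = k − g − l` (as integers) is encoded as
`a + b + 2c + g + l = k` over the natural numbers.
-/

open MvPolynomial

noncomputable section

/-- The polynomial ring `ℚ[α, β, γ]`. -/
abbrev PolyABG : Type := MvPolynomial (Fin 3) ℚ

/-- The polynomial `R_{k,m,l} = ∑_{b+c=m, a+b+2c=k−g−l} (g−l−c)! (α^a/a!) (β^b/b!) ((2γ)^c/c!)`. -/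
def Rpoly (g l k m : ℕ) : PolyABG :=
  ∑ t ∈ (Finset.range (k + 1) ×ˢ Finset.range (k + 1) ×ˢ Finset.range (k + 1)).filter
      (fun t => t.2.1 + t.2.2 = m ∧ t.1 + t.2.1 + 2 * t.2.2 + g + l = k),
    (((g - l - t.2.2).factorial : ℚ) /
        ((t.1.factorial : ℚ) * (t.2.1.factorial : ℚ) * (t.2.2.factorial : ℚ))) •
      (X 0 ^ t.1 * X 1 ^ t.2.1 * (2 * X 2) ^ t.2.2)

/-!
Everything is checked on coefficients, through first-order facts about the family `R_{k,m,l}`: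
`∂_α R_{k+1,m,l} = R_{k,m,l}`, `∂_β R_{k+1,m+1,l} = R_{k,m,l}`, `∂_γ R_{k+1,m+1,l} = 2 R_{k,m,l+1}`,
weighted homogeneity of degree `k - g - l` for the weights `(1, 1, 2)`, and, when `l + m < g`,
`∂_α R_{k,m,l} = ∂_β R_{k,m+1,l} = (g - l - γ∂_γ) R_{k,m,l+1}`.
In `f_α^d R_{k,m,l}` the terms `-α∂_α² - 2γ∂_α∂_γ` act on `∂_α R = R_{k-1,m,l}`, and Euler's identity
turns them into the scalar `g + l - (k - 1)` plus `β∂_β R_{k-1,m,l}`; by the last relation this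
`β∂_β`-term cancels the two `γ`-derivative terms of `f_α^d`.  The case of `f_β^d` is symmetric.
-/

open scoped Nat

namespace MvPolynomial

variable {R σ : Type*} [CommSemiring R]

theorem pderiv_pderiv_comm (i j : σ) (p : MvPolynomial σ R) :
    pderiv i (pderiv j p) = pderiv j (pderiv i p) := by
  classical
  ext v
  by_cases hij : i = j
  · rw [hij]
  simp only [coeff_pderiv, Finsupp.coe_add, Pi.add_apply, Finsupp.single_apply, hij,
    Ne.symm hij, if_false, add_zero, add_right_comm v]
  ring

theorem coeff_X_mul_pderiv (i : σ) (p : MvPolynomial σ R) (v : σ →₀ ℕ) :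
    coeff v (X i * pderiv i p) = v i * coeff v p := by
  classical
  rw [coeff_X_mul', coeff_pderiv]
  split_ifs with h
  · rw [Finsupp.mem_support_iff] at h
    rw [Finsupp.sub_add_single_one_cancel h, Finsupp.tsub_apply, Finsupp.single_eq_same,
      mul_comm, ← Nat.cast_add_one, Nat.sub_add_cancel (Nat.one_le_iff_ne_zero.2 h)]
  · rw [Finsupp.notMem_support_iff.1 h]
    simp

theorem C_inv_two_mul_two {K : Type*} [Field K] [NeZero (2 : K)] :
    (C (2⁻¹ : K) : MvPolynomial σ K) * 2 = 1 := by
  rw [← map_ofNat C 2, ← map_mul, inv_mul_cancel₀ two_ne_zero, map_one]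

end MvPolynomial

def RpolyCoeff (g l a b c : ℕ) : ℚ := (g - l - c)! * 2 ^ c / (a ! * b ! * c !)

theorem RpolyCoeff_succ_α_mul (g l a b c : ℕ) :
    RpolyCoeff g l (a + 1) b c * (a + 1) = RpolyCoeff g l a b c := by
  simp only [RpolyCoeff, Nat.factorial_succ, Nat.cast_mul]
  field_simp
  push_cast
  ring

theorem RpolyCoeff_succ_β_mul (g l a b c : ℕ) :
    RpolyCoeff g l a (b + 1) c * (b + 1) = RpolyCoeff g l a b c := by
  simp only [RpolyCoeff, Nat.factorial_succ, Nat.cast_mul]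
  field_simp
  push_cast
  ring

theorem RpolyCoeff_succ_γ_mul (g l a b c : ℕ) :
    RpolyCoeff g l a b (c + 1) * (c + 1) = 2 * RpolyCoeff g (l + 1) a b c := by
  simp only [RpolyCoeff, Nat.factorial_succ, Nat.cast_mul, Nat.sub_sub, add_comm 1 c, add_assoc]
  field_simp
  push_cast
  ring

theorem RpolyCoeff_eq_mul (g l a b c : ℕ) (h : l + c < g) :
    RpolyCoeff g l a b c = ((g : ℚ) - l - c) * RpolyCoeff g (l + 1) a b c := by
  obtain ⟨n, rfl⟩ : ∃ n, g = l + c + n + 1 := ⟨g - l - c - 1, by omega⟩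
  have h₁ : l + c + n + 1 - l - c = n + 1 := by omega
  have h₂ : l + c + n + 1 - (l + 1) - c = n := by omega
  simp only [RpolyCoeff, h₁, h₂, Nat.factorial_succ]
  push_cast
  ring

theorem coeff_Rpoly (g l k m : ℕ) (v : Fin 3 →₀ ℕ) :
    coeff v (Rpoly g l k m) =
      if v 1 + v 2 = m ∧ v 0 + v 1 + 2 * v 2 + g + l = k then RpolyCoeff g l (v 0) (v 1) (v 2)
      else 0 := by
  have hterm (a b c : ℕ) : (X 0 ^ a * X 1 ^ b * (2 * X 2) ^ c : PolyABG) =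
      monomial (Finsupp.single 0 a + Finsupp.single 1 b + Finsupp.single 2 c) (2 ^ c) := by
    rw [mul_pow, ← map_ofNat C 2, ← C_pow, X_pow_eq_monomial, X_pow_eq_monomial,
      X_pow_eq_monomial, monomial_mul, C_mul_monomial, monomial_mul]
    norm_num
  have hexp (a b c : ℕ) : Finsupp.single 0 a + Finsupp.single 1 b + Finsupp.single 2 c = v ↔
      (a, b, c) = (v 0, v 1, v 2) := by
    constructor
    · rintro rfl
      simp
    · rintro ⟨⟩
      ext i
      fin_cases i <;> simp
  simp only [Rpoly, coeff_sum, hterm, coeff_smul, coeff_monomial, hexp, smul_ite, smul_zero]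
  rw [Finset.sum_ite_eq']
  simp only [Finset.mem_filter, Finset.mem_product, Finset.mem_range, RpolyCoeff, smul_eq_mul]
  congr 1
  · apply propext
    omega
  · ring

theorem Rpoly_eq_zero_of_lt {g l k m : ℕ} (h : k < g + l) : Rpoly g l k m = 0 :=
  Finset.sum_eq_zero fun _ ht => absurd (Finset.mem_filter.1 ht).2.2 (by omega)

theorem isWeightedHomogeneous_Rpoly (g l k m : ℕ) :
    (Rpoly g l k m).IsWeightedHomogeneous ![1, 1, 2] (k - (g + l)) := by
  intro v hv
  rw [coeff_Rpoly] at hv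
  simp only [Finsupp.weight_eq_sum, Fin.sum_univ_three]
  split_ifs at hv with hc
  · simp only [Matrix.cons_val_zero, smul_eq_mul, mul_one, Matrix.cons_val_one, Matrix.cons_val]
    omega
  · exact absurd rfl hv

theorem weighted_euler_Rpoly (g l k m : ℕ) :
    X 0 * pderiv 0 (Rpoly g l k m) + X 1 * pderiv 1 (Rpoly g l k m)
        + 2 * (X 2 * pderiv 2 (Rpoly g l k m)) =
      ((k : PolyABG) - (g : PolyABG) - (l : PolyABG)) * Rpoly g l k m := by
  rcases lt_or_ge k (g + l) with h | h
  · simp [Rpoly_eq_zero_of_lt h]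
  have euler := (isWeightedHomogeneous_Rpoly g l k m).sum_weight_X_mul_pderiv
  simp only [nsmul_eq_mul, Fin.sum_univ_three, Matrix.cons_val_zero, Nat.cast_one, one_mul,
    Matrix.cons_val_one, Matrix.cons_val, Nat.cast_ofNat] at euler
  rw [euler, Nat.cast_sub h]
  push_cast
  ring

theorem pderiv_α_Rpoly_succ (g l k m : ℕ) :
    pderiv 0 (Rpoly g l (k + 1) m) = Rpoly g l k m := by
  ext v
  simp only [coeff_pderiv, coeff_Rpoly, Finsupp.coe_add, Pi.add_apply, Finsupp.single_apply,
    Fin.reduceEq, if_true, if_false, add_zero]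
  split_ifs <;> first | omega | simp [RpolyCoeff_succ_α_mul]

theorem pderiv_β_Rpoly_succ_succ (g l k m : ℕ) :
    pderiv 1 (Rpoly g l (k + 1) (m + 1)) = Rpoly g l k m := by
  ext v
  simp only [coeff_pderiv, coeff_Rpoly, Finsupp.coe_add, Pi.add_apply, Finsupp.single_apply,
    Fin.reduceEq, if_true, if_false, add_zero]
  split_ifs <;> first | omega | simp [RpolyCoeff_succ_β_mul]

theorem pderiv_γ_Rpoly_succ_succ (g l k m : ℕ) :
    pderiv 2 (Rpoly g l (k + 1) (m + 1)) = 2 * Rpoly g (l + 1) k m := by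
  ext v
  simp only [coeff_pderiv, coeff_Rpoly, Finsupp.coe_add, Pi.add_apply, Finsupp.single_apply,
    Fin.reduceEq, if_true, if_false, add_zero, ← map_ofNat C 2, coeff_C_mul]
  split_ifs <;> first | omega | simp [RpolyCoeff_succ_γ_mul]

theorem pderiv_β_Rpoly_zero (g l k : ℕ) : pderiv 1 (Rpoly g l k 0) = 0 := by
  ext v
  simp [coeff_pderiv, coeff_Rpoly]

theorem pderiv_γ_Rpoly_zero (g l k : ℕ) : pderiv 2 (Rpoly g l k 0) = 0 := by
  ext v
  simp [coeff_pderiv, coeff_Rpoly]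

theorem pderiv_α_Rpoly_of_lt {g l m : ℕ} (k : ℕ) (h : l + m < g) :
    pderiv 0 (Rpoly g l k m) =
      ((g : PolyABG) - (l : PolyABG)) * Rpoly g (l + 1) k m
        - X 2 * pderiv 2 (Rpoly g (l + 1) k m) := by
  ext v
  rw [show (g : PolyABG) - (l : PolyABG) = C ((g : ℚ) - l) by simp]
  simp only [coeff_sub, coeff_C_mul, coeff_X_mul_pderiv, coeff_pderiv, coeff_Rpoly,
    Finsupp.coe_add, Pi.add_apply, Finsupp.single_apply, Fin.reduceEq, if_true, if_false,
    add_zero]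
  split_ifs <;> first | omega | skip
  · rw [RpolyCoeff_succ_α_mul, RpolyCoeff_eq_mul _ _ _ _ _ (by omega)]
    ring
  · simp

theorem pderiv_β_Rpoly_succ_of_lt {g l m : ℕ} (k : ℕ) (h : l + m < g) :
    pderiv 1 (Rpoly g l k (m + 1)) =
      ((g : PolyABG) - (l : PolyABG)) * Rpoly g (l + 1) k m
        - X 2 * pderiv 2 (Rpoly g (l + 1) k m) := by
  ext v
  rw [show (g : PolyABG) - (l : PolyABG) = C ((g : ℚ) - l) by simp]
  simp only [coeff_sub, coeff_C_mul, coeff_X_mul_pderiv, coeff_pderiv, coeff_Rpoly,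
    Finsupp.coe_add, Pi.add_apply, Finsupp.single_apply, Fin.reduceEq, if_true, if_false,
    add_zero]
  split_ifs <;> first | omega | skip
  · rw [RpolyCoeff_succ_β_mul, RpolyCoeff_eq_mul _ _ _ _ _ (by omega)]
    ring
  · simp

/-- With `c = g + 2d - 1 - l` and `h = (g - l)/2`, `loweringOp 0 1 c h` is `f_α^d` and
`loweringOp 1 0 c h` is `f_β^d`. -/
def loweringOp (i j : Fin 3) (c h : ℚ) (p : PolyABG) : PolyABG :=
  -(X i * pderiv i (pderiv i p)) + c • pderiv i p - 2 * (X 2 * pderiv i (pderiv 2 p))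
    + (1 / 2 : ℚ) • (X j * X 2 * pderiv 2 (pderiv 2 p)) - h • (X j * pderiv 2 p)

theorem loweringOp_zero_one_Rpoly {g l m : ℕ} (d k : ℕ) (hgl : 0 < g + l) (hlm : l + m ≤ g) :
    loweringOp 0 1 ((g : ℚ) + 2 * d - 1 - l) (((g : ℚ) - l) / 2) (Rpoly g l k m) =
      (2 * (g : ℚ) + 2 * d - k) • Rpoly g l (k - 1) m := by
  obtain _ | k := k
  · simp [loweringOp, Rpoly_eq_zero_of_lt hgl]
  simp only [loweringOp, pderiv_pderiv_comm (R := ℚ) (0 : Fin 3) 2, pderiv_α_Rpoly_succ,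
    add_tsub_cancel_right, smul_eq_C_mul, div_eq_mul_inv, map_mul, map_sub, map_add,
    map_natCast, map_ofNat, map_one]
  have euler := weighted_euler_Rpoly g l k m
  rcases m with _ | m
  · simp only [pderiv_β_Rpoly_zero, pderiv_γ_Rpoly_zero, map_zero] at euler ⊢
    push_cast
    linear_combination -euler
  · rw [pderiv_β_Rpoly_succ_of_lt k (by omega)] at euler
    rw [pderiv_γ_Rpoly_succ_succ, ← map_ofNat C 2, pderiv_C_mul, map_ofNat]
    push_cast
    linear_combination -euler + X 1 * (X 2 * pderiv 2 (Rpoly g (l + 1) k m)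
      - ((g : PolyABG) - l) * Rpoly g (l + 1) k m) * C_inv_two_mul_two (σ := Fin 3) (K := ℚ)

theorem loweringOp_one_zero_Rpoly {g l m : ℕ} (d k : ℕ) (hgl : 0 < g + l) (hlm : l + m ≤ g) :
    loweringOp 1 0 ((g : ℚ) + 2 * d - 1 - l) (((g : ℚ) - l) / 2) (Rpoly g l k m) =
      (2 * (g : ℚ) + 2 * d - k) • (if m = 0 then 0 else Rpoly g l (k - 1) (m - 1)) := by
  rcases m with _ | m
  · simp [loweringOp, pderiv_β_Rpoly_zero, pderiv_γ_Rpoly_zero]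
  obtain _ | k := k
  · simp [loweringOp, Rpoly_eq_zero_of_lt hgl]
  simp only [loweringOp, pderiv_pderiv_comm (R := ℚ) (1 : Fin 3) 2, pderiv_β_Rpoly_succ_succ,
    add_tsub_cancel_right, add_eq_zero, one_ne_zero, and_false, if_false, smul_eq_C_mul,
    div_eq_mul_inv, map_mul, map_sub, map_add, map_natCast, map_ofNat, map_one]
  have euler := weighted_euler_Rpoly g l k m
  rw [pderiv_α_Rpoly_of_lt k (by omega)] at euler
  rw [pderiv_γ_Rpoly_succ_succ, ← map_ofNat C 2, pderiv_C_mul, map_ofNat]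
  push_cast
  linear_combination -euler + X 0 * (X 2 * pderiv 2 (Rpoly g (l + 1) k m)
    - ((g : PolyABG) - l) * Rpoly g (l + 1) k m) * C_inv_two_mul_two (σ := Fin 3) (K := ℚ)

theorem stmt15_general (g d l m : ℕ) (hg : 2 ≤ g) (hlm : l + m ≤ g) (k : ℕ) :
    (-(X 0 * pderiv 0 (pderiv 0 (Rpoly g l k m)))
        + ((g : ℚ) + 2 * (d : ℚ) - 1 - (l : ℚ)) • pderiv 0 (Rpoly g l k m)
        - 2 * (X 2 * pderiv 0 (pderiv 2 (Rpoly g l k m)))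
        + (1 / 2 : ℚ) • (X 1 * X 2 * pderiv 2 (pderiv 2 (Rpoly g l k m)))
        - (((g : ℚ) - (l : ℚ)) / 2) • (X 1 * pderiv 2 (Rpoly g l k m))
      = (2 * (g : ℚ) + 2 * (d : ℚ) - (k : ℚ)) • Rpoly g l (k - 1) m) ∧
    (-(X 1 * pderiv 1 (pderiv 1 (Rpoly g l k m)))
        + ((g : ℚ) + 2 * (d : ℚ) - 1 - (l : ℚ)) • pderiv 1 (Rpoly g l k m)
        - 2 * (X 2 * pderiv 1 (pderiv 2 (Rpoly g l k m)))
        + (1 / 2 : ℚ) • (X 0 * X 2 * pderiv 2 (pderiv 2 (Rpoly g l k m)))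
        - (((g : ℚ) - (l : ℚ)) / 2) • (X 0 * pderiv 2 (Rpoly g l k m))
      = (2 * (g : ℚ) + 2 * (d : ℚ) - (k : ℚ)) •
          (if m = 0 then 0 else Rpoly g l (k - 1) (m - 1))) :=
  ⟨loweringOp_zero_one_Rpoly d k (by omega) hlm, loweringOp_one_zero_Rpoly d k (by omega) hlm⟩

/-- for integers `g ≥ 2`, `d ≥ 1`, `l, m ≥ 0` with `l + m ≤ g` and every `k`,
the operators
`−α∂²/∂α² + (g+2d−1−l)∂/∂α − 2γ∂²/∂α∂γ + (1/2)βγ∂²/∂γ² − ((g−l)/2)β∂/∂γ` and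
`−β∂²/∂β² + (g+2d−1−l)∂/∂β − 2γ∂²/∂β∂γ + (1/2)αγ∂²/∂γ² − ((g−l)/2)α∂/∂γ`
send `R_{k,m,l}` to `(2g+2d−k)·R_{k−1,m,l}` and `(2g+2d−k)·R_{k−1,m−1,l}` respectively
(the latter being `0` when `m = 0`). -/
theorem stmt15 (g d l m : ℕ) (hg : 2 ≤ g) (hd : 1 ≤ d) (hlm : l + m ≤ g) (k : ℕ) :
    (-(X 0 * pderiv 0 (pderiv 0 (Rpoly g l k m)))
        + ((g : ℚ) + 2 * (d : ℚ) - 1 - (l : ℚ)) • pderiv 0 (Rpoly g l k m)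
        - 2 * (X 2 * pderiv 0 (pderiv 2 (Rpoly g l k m)))
        + (1 / 2 : ℚ) • (X 1 * X 2 * pderiv 2 (pderiv 2 (Rpoly g l k m)))
        - (((g : ℚ) - (l : ℚ)) / 2) • (X 1 * pderiv 2 (Rpoly g l k m))
      = (2 * (g : ℚ) + 2 * (d : ℚ) - (k : ℚ)) • Rpoly g l (k - 1) m) ∧
    (-(X 1 * pderiv 1 (pderiv 1 (Rpoly g l k m)))
        + ((g : ℚ) + 2 * (d : ℚ) - 1 - (l : ℚ)) • pderiv 1 (Rpoly g l k m)
        - 2 * (X 2 * pderiv 1 (pderiv 2 (Rpoly g l k m)))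
        + (1 / 2 : ℚ) • (X 0 * X 2 * pderiv 2 (pderiv 2 (Rpoly g l k m)))
        - (((g : ℚ) - (l : ℚ)) / 2) • (X 0 * pderiv 2 (Rpoly g l k m))
      = (2 * (g : ℚ) + 2 * (d : ℚ) - (k : ℚ)) •
          (if m = 0 then 0 else Rpoly g l (k - 1) (m - 1))) :=
  stmt15_general g d l m hg hlm k

end
end

section
/- Let g ≥ 1 be an integer. The polynomial (1 + q²)^{2g} − 2^{2g}·q^{2g} ∈ ℤ[q] is divisible by (1 − q²)² in ℤ[q], and the quotient polynomial P satisfies: P has degree 4g − 4; the coefficient of q^j in P is zero for all odd j; all coefficients of P are nonnegative; P is palindromic, i.e. the coefficient of q^j equals the coefficient of q^{4g−4−j} for all 0 ≤ j ≤ 4g−4; and the even coefficients are monotonically nondecreasing up to the middle, i.e. coeff(P, 2i) ≤ coeff(P, 2i+2) whenever 2i + 2 ≤ 2g − 2. -/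
/-!
With `t = q²`, the identity `(1 + t)² - 4t = (1 - t)²` makes the quotient a geometric sum:
`P(q) = Q(q²)` with `Q = ∑_{i<g} (1 + t)^{2i} (4t)^{g-1-i}`. Each summand is a positive multiple
of a shifted row of Pascal's triangle, `t^{g-1-i} (1 + t)^{2i}`, whose coefficients are
nonnegative, symmetric and unimodal about the same degree `g - 1`; these properties pass to the
sum, and then to `P` on the even coefficients.
-/

open Polynomial Finset

namespace Polynomial

section CommSemiring

variable {R : Type*} [CommSemiring R]

theorem coeff_expand_symm {p : R[X]} {N k : ℕ} (hk : 0 < k)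
    (hp : ∀ j ≤ N, p.coeff j = p.coeff (N - j)) (j : ℕ) (hj : j ≤ k * N) :
    (expand R k p).coeff j = (expand R k p).coeff (k * N - j) := by
  by_cases hdvd : k ∣ j
  · obtain ⟨a, rfl⟩ := hdvd
    have ha : a ≤ N := le_of_mul_le_mul_left hj hk
    rw [← Nat.mul_sub, coeff_expand_mul' hk, coeff_expand_mul' hk, hp a ha]
  · have hdvd' : ¬ k ∣ k * N - j := fun h ↦
      hdvd (by simpa [Nat.sub_sub_self hj] using Nat.dvd_sub (dvd_mul_right k N) h)
    rw [coeff_expand hk, coeff_expand hk, if_neg hdvd, if_neg hdvd']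

end CommSemiring

variable {R : Type*} [Semiring R]

theorem coeff_X_pow_mul_one_add_X_pow (k m j : ℕ) :
    (X ^ k * (1 + X) ^ m : R[X]).coeff j = if k ≤ j then (m.choose (j - k) : R) else 0 := by
  rw [coeff_X_pow_mul', coeff_one_add_X_pow]

variable [PartialOrder R]

/-- Unimodality is only asked on the lower half; the upper half follows by symmetry. -/
structure IsSymmetricUnimodal (N : ℕ) (p : R[X]) : Prop where
  coeff_nonneg : ∀ j, 0 ≤ p.coeff j
  coeff_eq_zero : ∀ j, N < j → p.coeff j = 0
  coeff_symm : ∀ j ≤ N, p.coeff j = p.coeff (N - j)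
  coeff_mono : ∀ j, 2 * j + 2 ≤ N → p.coeff j ≤ p.coeff (j + 1)

namespace IsSymmetricUnimodal

variable {N : ℕ} {p : R[X]}

theorem natDegree_le (hp : IsSymmetricUnimodal N p) : p.natDegree ≤ N :=
  natDegree_le_iff_coeff_eq_zero.mpr fun j hj ↦ hp.coeff_eq_zero j (mod_cast hj)

theorem natDegree_eq (hp : IsSymmetricUnimodal N p) (h0 : p.coeff 0 ≠ 0) : p.natDegree = N :=
  hp.natDegree_le.antisymm <| le_natDegree_of_ne_zero <| by
    rwa [hp.coeff_symm N le_rfl, Nat.sub_self]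

variable [IsOrderedRing R]

theorem C_mul (hp : IsSymmetricUnimodal N p) {c : R} (hc : 0 ≤ c) :
    IsSymmetricUnimodal N (C c * p) where
  coeff_nonneg j := by rw [coeff_C_mul]; exact mul_nonneg hc (hp.coeff_nonneg j)
  coeff_eq_zero j hj := by rw [coeff_C_mul, hp.coeff_eq_zero j hj, mul_zero]
  coeff_symm j hj := by rw [coeff_C_mul, coeff_C_mul, hp.coeff_symm j hj]
  coeff_mono j hj := by
    rw [coeff_C_mul, coeff_C_mul]; exact mul_le_mul_of_nonneg_left (hp.coeff_mono j hj) hc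

theorem sum {ι : Type*} {s : Finset ι} {f : ι → R[X]}
    (hf : ∀ i ∈ s, IsSymmetricUnimodal N (f i)) : IsSymmetricUnimodal N (∑ i ∈ s, f i) where
  coeff_nonneg j := by
    rw [finsetSum_coeff]; exact sum_nonneg fun i hi ↦ (hf i hi).coeff_nonneg j
  coeff_eq_zero j hj := by
    rw [finsetSum_coeff]; exact sum_eq_zero fun i hi ↦ (hf i hi).coeff_eq_zero j hj
  coeff_symm j hj := by
    simp only [finsetSum_coeff]; exact sum_congr rfl fun i hi ↦ (hf i hi).coeff_symm j hj
  coeff_mono j hj := by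
    simp only [finsetSum_coeff]; exact sum_le_sum fun i hi ↦ (hf i hi).coeff_mono j hj

end IsSymmetricUnimodal

variable [IsOrderedRing R]

theorem isSymmetricUnimodal_X_pow_mul_one_add_X_pow (k m : ℕ) :
    IsSymmetricUnimodal (2 * k + m) (X ^ k * (1 + X) ^ m : R[X]) where
  coeff_nonneg j := by
    rw [coeff_X_pow_mul_one_add_X_pow]; split_ifs <;> simp
  coeff_eq_zero j hj := by
    rw [coeff_X_pow_mul_one_add_X_pow, if_pos (by omega), Nat.choose_eq_zero_of_lt (by omega),
      Nat.cast_zero]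
  coeff_symm j hj := by
    simp only [coeff_X_pow_mul_one_add_X_pow]
    split_ifs with h h' h'
    · rw [Nat.choose_symm_of_eq_add (a := j - k) (b := 2 * k + m - j - k) (by omega)]
    · rw [Nat.choose_eq_zero_of_lt (by omega), Nat.cast_zero]
    · rw [Nat.choose_eq_zero_of_lt (by omega), Nat.cast_zero]
    · rfl
  coeff_mono j hj := by
    simp only [coeff_X_pow_mul_one_add_X_pow]
    split_ifs with h h'
    · rw [Nat.sub_add_comm h]
      exact Nat.mono_cast (Nat.choose_le_succ_of_lt_half_left (by omega))
    · omega
    · exact Nat.cast_nonneg _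
    · rfl

end Polynomial

noncomputable def chernPoincareSq (g : ℕ) : ℤ[X] :=
  ∑ i ∈ range g, ((1 + X) ^ 2) ^ i * (4 * X) ^ (g - 1 - i)

theorem sq_one_sub_X_mul_chernPoincareSq (g : ℕ) :
    (1 - X) ^ 2 * chernPoincareSq g = ((1 + X) ^ 2) ^ g - (4 * X) ^ g := by
  rw [← geom_sum₂_mul, chernPoincareSq]; ring

theorem isSymmetricUnimodal_chernPoincareSq (g : ℕ) :
    IsSymmetricUnimodal (2 * g - 2) (chernPoincareSq g) := by
  refine IsSymmetricUnimodal.sum fun i hi ↦ ?_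
  have hterm : ((1 + X) ^ 2) ^ i * (4 * X) ^ (g - 1 - i) =
      C (4 ^ (g - 1 - i)) * (X ^ (g - 1 - i) * (1 + X) ^ (2 * i) : ℤ[X]) := by
    rw [← pow_mul, mul_pow, C_pow, C_ofNat, mul_comm 2 i]; ring
  have hwidth : 2 * g - 2 = 2 * (g - 1 - i) + 2 * i := by grind
  rw [hterm, hwidth]
  exact (isSymmetricUnimodal_X_pow_mul_one_add_X_pow _ _).C_mul (by positivity)

theorem coeff_zero_chernPoincareSq {g : ℕ} (hg : 1 ≤ g) : (chernPoincareSq g).coeff 0 = 1 := by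
  obtain ⟨n, rfl⟩ := Nat.exists_eq_add_of_le' hg
  rw [coeff_zero_eq_eval_zero, chernPoincareSq, eval_finsetSum, sum_range_succ,
    sum_eq_zero fun i hi ↦ ?_]
  · simp
  · have hi : n + 1 - 1 - i ≠ 0 := by grind
    simp only [eval_mul, eval_pow, eval_X, mul_zero, zero_pow hi]

theorem natDegree_chernPoincareSq (g : ℕ) : (chernPoincareSq g).natDegree = 2 * g - 2 := by
  rcases Nat.eq_zero_or_pos g with rfl | hg
  · simp [chernPoincareSq]
  · exact (isSymmetricUnimodal_chernPoincareSq g).natDegree_eq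
      (by rw [coeff_zero_chernPoincareSq hg]; exact one_ne_zero)

theorem stmt17_general (g : ℕ) :
    ∃ P : Polynomial ℤ,
      ((1 - X ^ 2) ^ 2) * P =
        (1 + X ^ 2) ^ (2 * g) - (2 : Polynomial ℤ) ^ (2 * g) * X ^ (2 * g) ∧
      P.natDegree = 4 * g - 4 ∧
      (∀ j, Odd j → P.coeff j = 0) ∧
      (∀ j, 0 ≤ P.coeff j) ∧
      (∀ j ≤ 4 * g - 4, P.coeff j = P.coeff (4 * g - 4 - j)) ∧
      (∀ i, 2 * i + 2 ≤ 2 * g - 2 → P.coeff (2 * i) ≤ P.coeff (2 * i + 2)) := by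
  have hQ := isSymmetricUnimodal_chernPoincareSq g
  refine ⟨expand ℤ 2 (chernPoincareSq g), ?_, ?_, ?_, ?_, ?_, ?_⟩
  · have h := congrArg (expand ℤ 2) (sq_one_sub_X_mul_chernPoincareSq g)
    simp only [map_mul, map_sub, map_pow, map_add, map_one, map_ofNat, expand_X] at h
    rw [h, pow_mul, pow_mul (2 : ℤ[X]), pow_mul X, ← mul_pow]; norm_num
  · rw [natDegree_expand, natDegree_chernPoincareSq]; omega
  · intro j hj
    rw [coeff_expand two_pos, if_neg hj.not_two_dvd_nat]
  · intro j
    rw [coeff_expand two_pos]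
    split_ifs
    exacts [hQ.coeff_nonneg _, le_rfl]
  · intro j hj
    rw [show 4 * g - 4 = 2 * (2 * g - 2) by omega]
    exact coeff_expand_symm two_pos hQ.coeff_symm j (by omega)
  · intro i hi
    rw [show 2 * i + 2 = 2 * (i + 1) by ring, coeff_expand_mul' two_pos, coeff_expand_mul' two_pos]
    exact hQ.coeff_mono i hi

/-- for `g ≥ 1`, the polynomial `(1+q²)^{2g} − 2^{2g} q^{2g} ∈ ℤ[q]` is
divisible by `(1−q²)²`, and the quotient `P` has degree `4g−4`, vanishing odd coefficients,
nonnegative coefficients, palindromic coefficients (`coeff j = coeff (4g−4−j)`), and even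
coefficients nondecreasing up to the middle. -/
theorem stmt17 (g : ℕ) (hg : 1 ≤ g) :
    ∃ P : Polynomial ℤ,
      ((1 - X ^ 2) ^ 2) * P =
        (1 + X ^ 2) ^ (2 * g) - (2 : Polynomial ℤ) ^ (2 * g) * X ^ (2 * g) ∧
      P.natDegree = 4 * g - 4 ∧
      (∀ j, Odd j → P.coeff j = 0) ∧
      (∀ j, 0 ≤ P.coeff j) ∧
      (∀ j ≤ 4 * g - 4, P.coeff j = P.coeff (4 * g - 4 - j)) ∧
      (∀ i, 2 * i + 2 ≤ 2 * g - 2 → P.coeff (2 * i) ≤ P.coeff (2 * i + 2)) :=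
  stmt17_general g
end
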